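/- arXiv:1508.05838 — 7 statements merged into one kernel-verified Lean document; each statement's English description precedes it below -/
import Mathlib

section
/- For every z ∈ ℂ and every τ in the upper half-plane, θ[1;1/2]²·θ[1;0](z,τ)² + θ[1;0]²·θ[1;1/2](z,τ)·θ[1;3/2](z,τ) − θ[1;1/2]²·θ[1;1](z,τ)² = 0. -/
open Complex

/-- Theta function with characteristics `[ε; ε']` of Farkas and Kra. -/
noncomputable def thetaChar (ε ε' : ℝ) (ζ τ : ℂ) : ℂ :=
  ∑' n : ℤ, Complex.exp (2 * (Real.pi : ℂ) * I *
    ((1 / 2) * ((n : ℂ) + (ε : ℂ) / 2) ^ 2 * τ + ((n : ℂ) + (ε : ℂ) / 2) * (ζ + (ε' : ℂ) / 2)))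

/-!
For `n, m ∈ ℤ` the pair `(n + m, n - m)` is either `(2a, 2b)` or `(2a + 1, 2b + 1)`. Splitting the
double series of `θ[ε;0](w₁, τ) θ[δ;0](w₂, τ)` along this parity gives the addition formula
`θ[ε;0](w₁, τ) θ[δ;0](w₂, τ) = θ[(ε+δ)/2;0](w₁ + w₂, 2τ) θ[(ε-δ)/2;0](w₁ - w₂, 2τ)
  + θ[(ε+δ)/2+1;0](w₁ + w₂, 2τ) θ[(ε-δ)/2+1;0](w₁ - w₂, 2τ)`.
Since `θ[1;ε'](z, τ) = θ[1;0](z + ε'/2, τ)`, each of the five products in the identity is a product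
`θ[1;0](w₁, τ) θ[1;0](w₂, τ)`, and after the addition formula, the quasi-periodicity in `z` and
`θ[1;0](1/2, 2τ) = 0`, the identity becomes a polynomial identity between theta values at `2τ`.
-/

noncomputable def thetaCharTerm (ε ε' : ℝ) (ζ τ : ℂ) (n : ℤ) : ℂ :=
  Complex.exp (2 * (Real.pi : ℂ) * I *
    ((1 / 2) * ((n : ℂ) + (ε : ℂ) / 2) ^ 2 * τ + ((n : ℂ) + (ε : ℂ) / 2) * (ζ + (ε' : ℂ) / 2)))

section Basic

variable (ε ε' : ℝ) (ζ τ : ℂ)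

theorem thetaChar_eq_tsum : thetaChar ε ε' ζ τ = ∑' n : ℤ, thetaCharTerm ε ε' ζ τ n := rfl

theorem thetaCharTerm_eq_mul_jacobiTheta₂_term (n : ℤ) :
    thetaCharTerm ε ε' ζ τ n =
      cexp (2 * Real.pi * I * (ε ^ 2 * τ / 8 + ε * (ζ + ε' / 2) / 2)) *
        jacobiTheta₂_term n (ζ + ε' / 2 + ε * τ / 2) τ := by
  rw [thetaCharTerm, jacobiTheta₂_term, ← Complex.exp_add]
  congr 1
  ring

theorem thetaChar_eq_thetaChar_zero : thetaChar ε ε' ζ τ = thetaChar ε 0 (ζ + ε' / 2) τ := by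
  simp only [thetaChar, Complex.ofReal_zero, zero_div, add_zero]

theorem thetaChar_add_two : thetaChar (ε + 2) ε' ζ τ = thetaChar ε ε' ζ τ := by
  symm
  rw [thetaChar, ← (Equiv.addRight (1 : ℤ)).tsum_eq]
  refine tsum_congr fun n => ?_
  simp only [Equiv.coe_addRight]
  congr 1
  push_cast
  ring

theorem thetaChar_neg : thetaChar ε ε' (-ζ) τ = thetaChar (-ε) (-ε') ζ τ := by
  rw [thetaChar, ← (Equiv.neg ℤ).tsum_eq]
  refine tsum_congr fun n => ?_
  simp only [Equiv.neg_apply]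
  congr 1
  push_cast
  ring

theorem thetaChar_add_one :
    thetaChar ε ε' (ζ + 1) τ = cexp (Real.pi * I * ε) * thetaChar ε ε' ζ τ := by
  rw [thetaChar, thetaChar, ← tsum_mul_left]
  refine tsum_congr fun n => ?_
  rw [← Complex.exp_add, Complex.exp_eq_exp_iff_exists_int]
  exact ⟨n, by ring⟩

end Basic

theorem summable_norm_thetaCharTerm (ε ε' : ℝ) (ζ : ℂ) {τ : ℂ} (hτ : 0 < τ.im) :
    Summable fun n : ℤ => ‖thetaCharTerm ε ε' ζ τ n‖ := by
  simp only [thetaCharTerm_eq_mul_jacobiTheta₂_term, norm_mul]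
  exact (summable_norm_iff.mpr ((summable_jacobiTheta₂_term_iff _ _).mpr hτ)).mul_left _

def evenSumPairs : Set (ℤ × ℤ) := {p | (p.1 + p.2) % 2 = 0}

def evenSumPairsEquiv : ℤ × ℤ ≃ evenSumPairs where
  toFun x := ⟨(x.1 + x.2, x.1 - x.2), by simp only [evenSumPairs, Set.mem_ofPred_eq]; omega⟩
  invFun y := ((y.1.1 + y.1.2) / 2, (y.1.1 - y.1.2) / 2)
  left_inv x := by
    obtain ⟨a, b⟩ := x
    simp only [Prod.mk.injEq]
    omega
  right_inv y := by
    obtain ⟨⟨m, n⟩, h⟩ := y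
    simp only [evenSumPairs, Set.mem_ofPred_eq] at h
    refine Subtype.ext ?_
    simp only [Prod.mk.injEq]
    omega

def oddSumPairsEquiv : ℤ × ℤ ≃ ↥evenSumPairsᶜ where
  toFun x := ⟨(x.1 + x.2 + 1, x.1 - x.2), by
    simp only [evenSumPairs, Set.mem_compl_iff, Set.mem_ofPred_eq]; omega⟩
  invFun y := ((y.1.1 + y.1.2 - 1) / 2, (y.1.1 - y.1.2 - 1) / 2)
  left_inv x := by
    obtain ⟨a, b⟩ := x
    simp only [Prod.mk.injEq]
    omega
  right_inv y := by
    obtain ⟨⟨m, n⟩, h⟩ := y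
    simp only [evenSumPairs, Set.mem_compl_iff, Set.mem_ofPred_eq] at h
    refine Subtype.ext ?_
    simp only [Prod.mk.injEq]
    omega

theorem thetaChar_mul_thetaChar {τ : ℂ} (hτ : 0 < τ.im) (ε δ : ℝ) (w₁ w₂ : ℂ) :
    thetaChar ε 0 w₁ τ * thetaChar δ 0 w₂ τ =
      thetaChar ((ε + δ) / 2) 0 (w₁ + w₂) (2 * τ) * thetaChar ((ε - δ) / 2) 0 (w₁ - w₂) (2 * τ) +
      thetaChar ((ε + δ) / 2 + 1) 0 (w₁ + w₂) (2 * τ) *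
        thetaChar ((ε - δ) / 2 + 1) 0 (w₁ - w₂) (2 * τ) := by
  have h2τ : 0 < (2 * τ).im := by simpa using hτ
  have h₁ := summable_norm_thetaCharTerm ε 0 w₁ hτ
  have h₂ := summable_norm_thetaCharTerm δ 0 w₂ hτ
  simp only [thetaChar_eq_tsum]
  rw [tsum_mul_tsum_of_summable_norm h₁ h₂,
    tsum_mul_tsum_of_summable_norm (summable_norm_thetaCharTerm _ _ _ h2τ)
      (summable_norm_thetaCharTerm _ _ _ h2τ),
    tsum_mul_tsum_of_summable_norm (summable_norm_thetaCharTerm _ _ _ h2τ)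
      (summable_norm_thetaCharTerm _ _ _ h2τ),
    ← (summable_mul_of_summable_norm h₁ h₂).tsum_subtype_add_tsum_subtype_compl evenSumPairs,
    ← evenSumPairsEquiv.tsum_eq, ← oddSumPairsEquiv.tsum_eq]
  congr 1 <;> refine tsum_congr fun ⟨a, b⟩ => ?_ <;>
    simp only [evenSumPairsEquiv, oddSumPairsEquiv, Equiv.coe_fn_mk, thetaCharTerm,
      ← Complex.exp_add] <;>
    congr 1 <;> push_cast <;> ring

section CharacteristicOneZero

variable (ζ τ : ℂ)

theorem thetaChar_one_zero_neg : thetaChar 1 0 (-ζ) τ = thetaChar 1 0 ζ τ := by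
  rw [thetaChar_neg, neg_zero, ← thetaChar_add_two]
  norm_num

theorem thetaChar_zero_zero_neg : thetaChar 0 0 (-ζ) τ = thetaChar 0 0 ζ τ := by
  rw [thetaChar_neg, neg_zero]

theorem thetaChar_one_zero_add_one : thetaChar 1 0 (ζ + 1) τ = -thetaChar 1 0 ζ τ := by
  rw [thetaChar_add_one, Complex.ofReal_one, mul_one, Complex.exp_pi_mul_I, neg_one_mul]

theorem thetaChar_zero_zero_add_one : thetaChar 0 0 (ζ + 1) τ = thetaChar 0 0 ζ τ := by
  rw [thetaChar_add_one, Complex.ofReal_zero, mul_zero, Complex.exp_zero, one_mul]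

theorem thetaChar_one_zero_half : thetaChar 1 0 (1 / 2) τ = 0 := by
  have h := thetaChar_one_zero_add_one (-(1 / 2)) τ
  rw [thetaChar_one_zero_neg, show -(1 / 2) + 1 = (1 / 2 : ℂ) by norm_num] at h
  exact CharZero.eq_neg_self_iff.mp h

end CharacteristicOneZero

theorem thetaChar_one_zero_mul_thetaChar_one_zero {τ : ℂ} (hτ : 0 < τ.im) (w₁ w₂ u v : ℂ)
    (hu : w₁ + w₂ = u) (hv : w₁ - w₂ = v) :
    thetaChar 1 0 w₁ τ * thetaChar 1 0 w₂ τ =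
      thetaChar 1 0 u (2 * τ) * thetaChar 0 0 v (2 * τ) +
      thetaChar 0 0 u (2 * τ) * thetaChar 1 0 v (2 * τ) := by
  rw [thetaChar_mul_thetaChar hτ, hu, hv, show ((1 : ℝ) + 1) / 2 = 1 by norm_num,
    show ((1 : ℝ) - 1) / 2 = 0 by norm_num, show (1 : ℝ) + 1 = 0 + 2 by norm_num,
    thetaChar_add_two, zero_add]

theorem stmt_0 (z τ : ℂ) (hτ : 0 < τ.im) :
    thetaChar 1 (1/2) 0 τ ^ 2 * thetaChar 1 0 z τ ^ 2
      + thetaChar 1 0 0 τ ^ 2 * thetaChar 1 (1/2) z τ * thetaChar 1 (3/2) z τ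
      - thetaChar 1 (1/2) 0 τ ^ 2 * thetaChar 1 1 z τ ^ 2 = 0 := by
  have ha : thetaChar 1 (1/2) 0 τ = thetaChar 1 0 (1/4) τ := by
    rw [thetaChar_eq_thetaChar_zero]; norm_num
  have hd : thetaChar 1 (1/2) z τ = thetaChar 1 0 (z + 1/4) τ := by
    rw [thetaChar_eq_thetaChar_zero]; norm_num
  have he : thetaChar 1 (3/2) z τ = thetaChar 1 0 (z + 3/4) τ := by
    rw [thetaChar_eq_thetaChar_zero]; norm_num
  have hf : thetaChar 1 1 z τ = thetaChar 1 0 (z + 1/2) τ := by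
    rw [thetaChar_eq_thetaChar_zero]; norm_num
  rw [ha, hd, he, hf]
  have addition := thetaChar_one_zero_mul_thetaChar_one_zero hτ
  have haa := addition (1/4) (1/4) (1/2) 0 (by ring) (by ring)
  have hzz := addition z z (2 * z) 0 (by ring) (by ring)
  have h00 := addition 0 0 0 0 (by ring) (by ring)
  have hff := addition (z + 1/2) (z + 1/2) (2 * z + 1) 0 (by ring) (by ring)
  have hde := addition (z + 1/4) (z + 3/4) (2 * z + 1) (-(1/2)) (by ring) (by ring)
  rw [thetaChar_one_zero_half] at haa
  rw [thetaChar_one_zero_add_one, thetaChar_zero_zero_add_one] at hff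
  rw [thetaChar_one_zero_add_one, thetaChar_zero_zero_add_one, thetaChar_one_zero_neg,
    thetaChar_zero_zero_neg, thetaChar_one_zero_half] at hde
  set s := thetaChar 1 0 0 (2 * τ)
  set q := thetaChar 0 0 0 (2 * τ)
  set v := thetaChar 0 0 (1/2) (2 * τ)
  linear_combination (thetaChar 1 0 z τ ^ 2 - thetaChar 1 0 (z + 1/2) τ ^ 2) * haa
    + v * s * hzz - v * s * hff + 2 * s * q * hde
    + thetaChar 1 0 (z + 1/4) τ * thetaChar 1 0 (z + 3/4) τ * h00
end

section
/- For every z ∈ ℂ and every τ in the upper half-plane, θ[1;2/3]²·θ[1;1/3](z,τ)·θ[1;5/3](z,τ) − θ[1;1/3]²·θ[1;2/3](z,τ)·θ[1;4/3](z,τ) + θ[1;0]·θ[1;2/3]·θ[1;1](z,τ)² = 0. -/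
/-!
Put `F w = θ[1;0](w, τ)`, so that `θ[1;ε'](z, τ) = F (z + ε'/2)`, and let `E`, `O` be the theta
series over `ℤ` and over `ℤ + 1/2` at `2τ`. Substituting `(n, n') = (p + q, p - q)` or
`(p + q + 1, p - q)` according to the parity of `n + n'`, and using
`m² + k² = 2((m + k)/2)² + 2((m - k)/2)²`, gives
`F x * F y = O (x + y) * E (x - y) + E (x + y) * O (x - y)`. Since `E` is even and `1`-periodic
while `O` is even and `1`-antiperiodic, `E (2/3) = E (1/3)` and `O (2/3) = -O (1/3)`, and after
expanding the six products the identity becomes a polynomial identity in `E 0`, `O 0`, `E (1/3)`,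
`O (1/3)`, `E (2z + 1)` and `O (2z + 1)`.
-/

open Complex

open Real

noncomputable def shiftedThetaTerm (a w τ : ℂ) (n : ℤ) : ℂ :=
  cexp (2 * π * I * ((n + a) ^ 2 * τ / 2 + (n + a) * w))

noncomputable def shiftedTheta (a w τ : ℂ) : ℂ := ∑' n : ℤ, shiftedThetaTerm a w τ n

lemma thetaChar_eq_shiftedTheta (ε ε' : ℝ) (ζ τ : ℂ) :
    thetaChar ε ε' ζ τ = shiftedTheta (ε / 2) (ζ + ε' / 2) τ := by
  refine tsum_congr fun n ↦ ?_
  rw [shiftedThetaTerm]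
  ring_nf

lemma shiftedThetaTerm_eq_mul_jacobiTheta₂_term (a w τ : ℂ) (n : ℤ) :
    shiftedThetaTerm a w τ n =
      cexp (2 * π * I * (a ^ 2 * τ / 2 + a * w)) * jacobiTheta₂_term n (w + a * τ) τ := by
  rw [shiftedThetaTerm, jacobiTheta₂_term, ← Complex.exp_add]
  ring_nf

lemma summable_norm_shiftedThetaTerm {τ : ℂ} (hτ : 0 < τ.im) (a w : ℂ) :
    Summable fun n ↦ ‖shiftedThetaTerm a w τ n‖ := by
  simp only [shiftedThetaTerm_eq_mul_jacobiTheta₂_term, norm_mul]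
  exact (summable_norm_iff.mpr ((summable_jacobiTheta₂_term_iff _ τ).mpr hτ)).mul_left _

lemma hasSum_shiftedThetaTerm_mul {τ : ℂ} (hτ : 0 < τ.im) (a b v w : ℂ) :
    HasSum (fun n : ℤ × ℤ ↦ shiftedThetaTerm a v τ n.1 * shiftedThetaTerm b w τ n.2)
      (shiftedTheta a v τ * shiftedTheta b w τ) := by
  have hv := summable_norm_shiftedThetaTerm hτ a v
  have hw := summable_norm_shiftedThetaTerm hτ b w
  exact hv.of_norm.hasSum.mul hw.of_norm.hasSum (summable_mul_of_summable_norm hv hw)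

def evenOddPairEquiv : (ℤ × ℤ) ⊕ (ℤ × ℤ) ≃ ℤ × ℤ where
  toFun := Sum.elim (fun q ↦ (q.1 + q.2, q.1 - q.2)) (fun q ↦ (q.1 + q.2 + 1, q.1 - q.2))
  invFun n := if (n.1 + n.2) % 2 = 0 then .inl ((n.1 + n.2) / 2, (n.1 - n.2) / 2)
    else .inr ((n.1 + n.2 - 1) / 2, (n.1 - n.2 - 1) / 2)
  left_inv := by
    rintro (⟨p, q⟩ | ⟨p, q⟩) <;> dsimp only [Sum.elim_inl, Sum.elim_inr] <;> split_ifs <;>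
      first | omega | (simp only [Sum.inl.injEq, Sum.inr.injEq, Prod.mk.injEq]; omega)
  right_inv := by
    rintro ⟨n, n'⟩
    dsimp only
    split_ifs <;> simp only [Sum.elim_inl, Sum.elim_inr, Prod.mk.injEq] <;> omega

lemma shiftedThetaTerm_add_mul_sub (a x y τ : ℂ) (p q : ℤ) :
    shiftedThetaTerm a x τ (p + q) * shiftedThetaTerm a y τ (p - q) =
      shiftedThetaTerm a (x + y) (2 * τ) p * shiftedThetaTerm 0 (x - y) (2 * τ) q := by
  simp only [shiftedThetaTerm, ← Complex.exp_add]
  push_cast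
  ring_nf

lemma shiftedThetaTerm_add_add_one_mul_sub (a x y τ : ℂ) (p q : ℤ) :
    shiftedThetaTerm a x τ (p + q + 1) * shiftedThetaTerm a y τ (p - q) =
      shiftedThetaTerm (a + 1 / 2) (x + y) (2 * τ) p *
        shiftedThetaTerm (1 / 2) (x - y) (2 * τ) q := by
  simp only [shiftedThetaTerm, ← Complex.exp_add]
  push_cast
  ring_nf

theorem shiftedTheta_mul_shiftedTheta {τ : ℂ} (hτ : 0 < τ.im) (a x y : ℂ) :
    shiftedTheta a x τ * shiftedTheta a y τ =
      shiftedTheta a (x + y) (2 * τ) * shiftedTheta 0 (x - y) (2 * τ) +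
        shiftedTheta (a + 1 / 2) (x + y) (2 * τ) * shiftedTheta (1 / 2) (x - y) (2 * τ) := by
  have h2τ : 0 < (2 * τ).im := by simpa using hτ
  refine (hasSum_shiftedThetaTerm_mul hτ a a x y).unique ?_
  rw [← evenOddPairEquiv.hasSum_iff]
  refine HasSum.sum ?_ ?_
  · simpa only [Function.comp_def, evenOddPairEquiv, Equiv.coe_fn_mk, Sum.elim_inl,
      shiftedThetaTerm_add_mul_sub] using hasSum_shiftedThetaTerm_mul h2τ a 0 (x + y) (x - y)
  · simpa only [Function.comp_def, evenOddPairEquiv, Equiv.coe_fn_mk, Sum.elim_inr,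
      shiftedThetaTerm_add_add_one_mul_sub] using
      hasSum_shiftedThetaTerm_mul h2τ (a + 1 / 2) (1 / 2) (x + y) (x - y)

lemma shiftedTheta_add_one_shift (a w τ : ℂ) : shiftedTheta (a + 1) w τ = shiftedTheta a w τ := by
  rw [shiftedTheta, shiftedTheta, ← (Equiv.addRight (1 : ℤ)).tsum_eq (shiftedThetaTerm a w τ)]
  refine tsum_congr fun n ↦ ?_
  simp only [shiftedThetaTerm, Equiv.coe_addRight]
  push_cast
  ring_nf

lemma shiftedThetaTerm_one_sub (a w τ : ℂ) (n : ℤ) :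
    shiftedThetaTerm a (1 - w) τ n = cexp (2 * π * I * a) * shiftedThetaTerm (-a) w τ (-n) := by
  rw [shiftedThetaTerm, shiftedThetaTerm, ← Complex.exp_add,
    show 2 * π * I * ((n + a) ^ 2 * τ / 2 + (n + a) * (1 - w)) =
      2 * π * I * a + 2 * π * I * ((((-n : ℤ) : ℂ) + -a) ^ 2 * τ / 2 + (((-n : ℤ) : ℂ) + -a) * w)
        + n * (2 * π * I) by push_cast; ring,
    Complex.exp_add _ (n * _), Complex.exp_int_mul_two_pi_mul_I, mul_one]

lemma shiftedTheta_one_sub (a w τ : ℂ) :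
    shiftedTheta a (1 - w) τ = cexp (2 * π * I * a) * shiftedTheta (-a) w τ := by
  simp only [shiftedTheta, shiftedThetaTerm_one_sub, tsum_mul_left]
  congr 1
  exact (Equiv.neg ℤ).tsum_eq (shiftedThetaTerm (-a) w τ)

lemma shiftedTheta_zero_one_sub (w τ : ℂ) : shiftedTheta 0 (1 - w) τ = shiftedTheta 0 w τ := by
  simp [shiftedTheta_one_sub]

lemma shiftedTheta_half_one_sub (w τ : ℂ) :
    shiftedTheta (1 / 2) (1 - w) τ = -shiftedTheta (1 / 2) w τ := by
  rw [shiftedTheta_one_sub, show 2 * π * I * (1 / 2) = π * I by ring, Complex.exp_pi_mul_I,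
    ← shiftedTheta_add_one_shift (-(1 / 2))]
  norm_num

lemma thetaChar_one_mul_thetaChar_one {τ : ℂ} (hτ : 0 < τ.im) (ε₁ ε₂ : ℝ) (ζ₁ ζ₂ : ℂ) :
    thetaChar 1 ε₁ ζ₁ τ * thetaChar 1 ε₂ ζ₂ τ =
      shiftedTheta (1 / 2) (ζ₁ + ζ₂ + (ε₁ + ε₂) / 2) (2 * τ) *
          shiftedTheta 0 (ζ₁ - ζ₂ + (ε₁ - ε₂) / 2) (2 * τ) +
        shiftedTheta 0 (ζ₁ + ζ₂ + (ε₁ + ε₂) / 2) (2 * τ) *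
          shiftedTheta (1 / 2) (ζ₁ - ζ₂ + (ε₁ - ε₂) / 2) (2 * τ) := by
  rw [thetaChar_eq_shiftedTheta, thetaChar_eq_shiftedTheta, shiftedTheta_mul_shiftedTheta hτ,
    show ((1 : ℝ) : ℂ) / 2 + 1 / 2 = 0 + 1 by norm_num, shiftedTheta_add_one_shift]
  push_cast
  ring_nf

theorem stmt_1 (z τ : ℂ) (hτ : 0 < τ.im) :
    thetaChar 1 (2/3) 0 τ ^ 2 * thetaChar 1 (1/3) z τ * thetaChar 1 (5/3) z τ
      - thetaChar 1 (1/3) 0 τ ^ 2 * thetaChar 1 (2/3) z τ * thetaChar 1 (4/3) z τ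
      + thetaChar 1 0 0 τ * thetaChar 1 (2/3) 0 τ * thetaChar 1 1 z τ ^ 2 = 0 := by
  have hE : shiftedTheta 0 (2 / 3) (2 * τ) = shiftedTheta 0 (1 / 3) (2 * τ) := by
    rw [← shiftedTheta_zero_one_sub]; norm_num
  have hO : shiftedTheta (1 / 2) (2 / 3) (2 * τ) = -shiftedTheta (1 / 2) (1 / 3) (2 * τ) := by
    rw [← shiftedTheta_half_one_sub]; norm_num
  calc _ = thetaChar 1 (2/3) 0 τ * thetaChar 1 (2/3) 0 τ *
          (thetaChar 1 (5/3) z τ * thetaChar 1 (1/3) z τ)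
        - thetaChar 1 (1/3) 0 τ * thetaChar 1 (1/3) 0 τ *
          (thetaChar 1 (4/3) z τ * thetaChar 1 (2/3) z τ)
        + thetaChar 1 (2/3) 0 τ * thetaChar 1 0 0 τ * (thetaChar 1 1 z τ * thetaChar 1 1 z τ) := by
        ring
    _ = 0 := by
      simp only [thetaChar_one_mul_thetaChar_one hτ]
      norm_num [hE, hO]
      ring
end

section
/- For every z ∈ ℂ and every τ in the upper half-plane, θ[1;3/4]²·θ[1;1/4](z,τ)·θ[1;7/4](z,τ) − θ[1;1/4]²·θ[1;3/4](z,τ)·θ[1;5/4](z,τ) + θ[1;0]·θ[1;1/2]·θ[1;1](z,τ)² = 0. -/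
/-! Shifting the summation index to half-integers `u = n + 1/2`, a theta function with
characteristic `ε = 1` is `∑ᵤ e(u²τ/2 + u(ζ + ε'/2))` with `e(w) = exp(2πiw)`, so each of the
three products is a sum over `(ℤ + 1/2)⁴` of `e(τ Σ uᵢ²/2 + ⟨u, c⟩)` for a phase vector `c`.
Split each sum by the parity of `n₁ + n₂ + n₃ + n₄`. Substitutions `u ↦ Hu/2`, with `H` a
`±1`-matrix satisfying `HHᵀ = 4`, preserve `Σ uᵢ²` and change the linear term by an integer
(by an integer plus `1/2` in the last case below, which produces the sign). They identify the
odd part of the first sum with the odd part of the second, the even part of the second with the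
even part of the third, and the even part of the first with minus the odd part of the third. -/

open Complex

theorem tsum_subtype_eq_of_bijOn {α γ β : Type*} [AddCommMonoid β] [TopologicalSpace β]
    {e : α → γ} {s : Set α} {t : Set γ} (he : Set.BijOn e s t) {f : α → β} {g : γ → β}
    (hfg : ∀ x ∈ s, g (e x) = f x) : ∑' x : s, f x = ∑' y : t, g y := by
  rw [← (he.equiv e).tsum_eq]
  exact tsum_congr fun x => (hfg x x.2).symm

theorem Int.cast_eq_div_two_of_two_mul_eq {K : Type*} [Field K] [CharZero K] {k l : ℤ}
    (h : 2 * k = l) : (k : K) = l / 2 := by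
  rw [← h]
  push_cast
  ring

section FourfoldProduct

variable {ι₁ ι₂ ι₃ ι₄ R : Type*} [NormedRing R] {f₁ : ι₁ → R} {f₂ : ι₂ → R} {f₃ : ι₃ → R}
  {f₄ : ι₄ → R}

def quadProd (f₁ : ι₁ → R) (f₂ : ι₂ → R) (f₃ : ι₃ → R) (f₄ : ι₄ → R) :
    ((ι₁ × ι₂) × ι₃) × ι₄ → R :=
  fun x => f₁ x.1.1.1 * f₂ x.1.1.2 * f₃ x.1.2 * f₄ x.2

theorem summable_norm_quadProd (h₁ : Summable (‖f₁ ·‖)) (h₂ : Summable (‖f₂ ·‖))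
    (h₃ : Summable (‖f₃ ·‖)) (h₄ : Summable (‖f₄ ·‖)) :
    Summable (‖quadProd f₁ f₂ f₃ f₄ ·‖) :=
  ((h₁.mul_norm h₂).mul_norm h₃).mul_norm h₄

theorem tsum_quadProd [CompleteSpace R] (h₁ : Summable (‖f₁ ·‖)) (h₂ : Summable (‖f₂ ·‖))
    (h₃ : Summable (‖f₃ ·‖)) (h₄ : Summable (‖f₄ ·‖)) :
    ∑' x, quadProd f₁ f₂ f₃ f₄ x = (∑' i, f₁ i) * (∑' i, f₂ i) * (∑' i, f₃ i) * (∑' i, f₄ i) := by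
  rw [tsum_mul_tsum_of_summable_norm h₁ h₂, tsum_mul_tsum_of_summable_norm (h₁.mul_norm h₂) h₃,
    tsum_mul_tsum_of_summable_norm ((h₁.mul_norm h₂).mul_norm h₃) h₄]
  rfl

end FourfoldProduct

namespace ThetaRelation

noncomputable def term (τ c : ℂ) (n : ℤ) : ℂ :=
  exp (2 * Real.pi * I * ((1 / 2) * ((n : ℂ) + 1 / 2) ^ 2 * τ + ((n : ℂ) + 1 / 2) * c))

theorem thetaChar_one_eq_tsum_term {ε' : ℝ} {ζ τ c : ℂ} (hc : ζ + ε' / 2 = c) :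
    thetaChar 1 ε' ζ τ = ∑' n, term τ c n := by
  simp only [thetaChar, term, ← hc, ofReal_one]

theorem term_eq_mul_jacobiTheta₂_term (τ c : ℂ) (n : ℤ) :
    term τ c n = exp (Real.pi * I * τ / 4 + Real.pi * I * c) *
      jacobiTheta₂_term n (c + τ / 2) τ := by
  rw [term, jacobiTheta₂_term, ← exp_add]
  congr 1
  ring

theorem summable_norm_term {τ : ℂ} (hτ : 0 < τ.im) (c : ℂ) : Summable (‖term τ c ·‖) := by
  have h := (summable_jacobiTheta₂_term_iff (c + τ / 2) τ).mpr hτ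
  simpa only [term_eq_mul_jacobiTheta₂_term, norm_mul] using h.norm.mul_left _

theorem summable_quadProd_term {τ : ℂ} (hτ : 0 < τ.im) (a b c d : ℂ) :
    Summable (quadProd (term τ a) (term τ b) (term τ c) (term τ d)) :=
  (summable_norm_quadProd (summable_norm_term hτ a) (summable_norm_term hτ b)
    (summable_norm_term hτ c) (summable_norm_term hτ d)).of_norm

theorem tsum_quadProd_term {τ : ℂ} (hτ : 0 < τ.im) (a b c d : ℂ) :
    ∑' x, quadProd (term τ a) (term τ b) (term τ c) (term τ d) x =
      (∑' n, term τ a n) * (∑' n, term τ b n) * (∑' n, term τ c n) * (∑' n, term τ d n) :=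
  tsum_quadProd (summable_norm_term hτ a) (summable_norm_term hτ b)
    (summable_norm_term hτ c) (summable_norm_term hτ d)

abbrev IntQuad := ((ℤ × ℤ) × ℤ) × ℤ

noncomputable def termA (τ z : ℂ) : IntQuad → ℂ :=
  quadProd (term τ (3 / 8)) (term τ (3 / 8)) (term τ (z + 1 / 8)) (term τ (z + 7 / 8))

noncomputable def termB (τ z : ℂ) : IntQuad → ℂ :=
  quadProd (term τ (1 / 8)) (term τ (1 / 8)) (term τ (z + 3 / 8)) (term τ (z + 5 / 8))

noncomputable def termC (τ z : ℂ) : IntQuad → ℂ :=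
  quadProd (term τ 0) (term τ (1 / 4)) (term τ (z + 1 / 2)) (term τ (z + 1 / 2))

theorem tsum_termA {τ : ℂ} (hτ : 0 < τ.im) (z : ℂ) : ∑' x, termA τ z x =
    thetaChar 1 (3/4) 0 τ ^ 2 * thetaChar 1 (1/4) z τ * thetaChar 1 (7/4) z τ := by
  rw [sq, thetaChar_one_eq_tsum_term (c := 3 / 8) (by push_cast; ring),
    thetaChar_one_eq_tsum_term (c := z + 1 / 8) (by push_cast; ring),
    thetaChar_one_eq_tsum_term (c := z + 7 / 8) (by push_cast; ring)]
  exact tsum_quadProd_term hτ _ _ _ _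

theorem tsum_termB {τ : ℂ} (hτ : 0 < τ.im) (z : ℂ) : ∑' x, termB τ z x =
    thetaChar 1 (1/4) 0 τ ^ 2 * thetaChar 1 (3/4) z τ * thetaChar 1 (5/4) z τ := by
  rw [sq, thetaChar_one_eq_tsum_term (c := 1 / 8) (by push_cast; ring),
    thetaChar_one_eq_tsum_term (c := z + 3 / 8) (by push_cast; ring),
    thetaChar_one_eq_tsum_term (c := z + 5 / 8) (by push_cast; ring)]
  exact tsum_quadProd_term hτ _ _ _ _

theorem tsum_termC {τ : ℂ} (hτ : 0 < τ.im) (z : ℂ) : ∑' x, termC τ z x =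
    thetaChar 1 0 0 τ * thetaChar 1 (1/2) 0 τ * thetaChar 1 1 z τ ^ 2 := by
  rw [sq, ← mul_assoc, thetaChar_one_eq_tsum_term (c := 0) (by push_cast; ring),
    thetaChar_one_eq_tsum_term (c := 1 / 4) (by push_cast; ring),
    thetaChar_one_eq_tsum_term (c := z + 1 / 2) (by push_cast; ring)]
  exact tsum_quadProd_term hτ _ _ _ _

theorem termB_eq_termA (τ z : ℂ) {a b c d a' b' c' d' : ℤ}
    (ha : 2 * a' = a - b + c - d - 1) (hb : 2 * b' = -a + b + c - d - 1)
    (hc : 2 * c' = a + b + c + d + 1) (hd : 2 * d' = -a - b + c + d - 1) :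
    termB τ z (((a', b'), c'), d') = termA τ z (((a, b), c), d) := by
  simp only [termB, termA, quadProd, term, ← exp_add]
  refine exp_eq_exp_iff_exists_int.mpr ⟨a' - a, ?_⟩
  push_cast
  rw [Int.cast_eq_div_two_of_two_mul_eq ha, Int.cast_eq_div_two_of_two_mul_eq hb,
    Int.cast_eq_div_two_of_two_mul_eq hc, Int.cast_eq_div_two_of_two_mul_eq hd]
  push_cast
  ring

theorem termC_eq_termB (τ z : ℂ) {a b c d a' b' c' d' : ℤ}
    (ha : 2 * a' = a + b + c - d) (hb : 2 * b' = a + b - c + d)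
    (hc : 2 * c' = a - b + c + d) (hd : 2 * d' = -a + b + c + d) :
    termC τ z (((a', b'), c'), d') = termB τ z (((a, b), c), d) := by
  simp only [termC, termB, quadProd, term, ← exp_add]
  congr 1
  rw [Int.cast_eq_div_two_of_two_mul_eq ha, Int.cast_eq_div_two_of_two_mul_eq hb,
    Int.cast_eq_div_two_of_two_mul_eq hc, Int.cast_eq_div_two_of_two_mul_eq hd]
  push_cast
  ring

theorem termC_eq_neg_termA (τ z : ℂ) {a b c d a' b' c' d' : ℤ}
    (ha : 2 * a' = a + b + c - d) (hb : 2 * b' = -a - b + c - d - 2)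
    (hc : 2 * c' = a - b + c + d) (hd : 2 * d' = -a + b + c + d) :
    termC τ z (((a', b'), c'), d') = -termA τ z (((a, b), c), d) := by
  simp only [termC, termA, quadProd, term, ← exp_add]
  rw [← neg_one_mul, ← exp_pi_mul_I, ← exp_add]
  refine exp_eq_exp_iff_exists_int.mpr ⟨b', ?_⟩
  rw [Int.cast_eq_div_two_of_two_mul_eq ha, Int.cast_eq_div_two_of_two_mul_eq hb,
    Int.cast_eq_div_two_of_two_mul_eq hc, Int.cast_eq_div_two_of_two_mul_eq hd]
  push_cast
  ring

def oddSum : Set IntQuad := {x | (x.1.1.1 + x.1.1.2 + x.1.2 + x.2) % 2 = 1}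

theorem mem_oddSum {a b c d : ℤ} : (((a, b), c), d) ∈ oddSum ↔ (a + b + c + d) % 2 = 1 :=
  Iff.rfl

/- In the coordinates `uᵢ = nᵢ + 1/2` each of the following maps is `u ↦ Hu/2` for a
`±1`-matrix `H` with `HHᵀ = 4`. The integer divisions are exact only on the parity class of the
source, where `Hu/2` is again half-integral. -/

def oddMap : IntQuad → IntQuad
  | (((a, b), c), d) =>
    ((((a - b + c - d - 1) / 2, (-a + b + c - d - 1) / 2), (a + b + c + d + 1) / 2),
      (-a - b + c + d - 1) / 2)

def evenMap : IntQuad → IntQuad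
  | (((a, b), c), d) =>
    ((((a + b + c - d) / 2, (a + b - c + d) / 2), (a - b + c + d) / 2), (-a + b + c + d) / 2)

def evenToOdd : IntQuad → IntQuad
  | (((a, b), c), d) =>
    ((((a + b + c - d) / 2, (-a - b + c - d - 2) / 2), (a - b + c + d) / 2),
      (-a + b + c + d) / 2)

def oddToEven : IntQuad → IntQuad
  | (((a, b), c), d) =>
    ((((a - b + c - d - 1) / 2, (a - b - c + d - 1) / 2), (a + b + c + d + 1) / 2),
      (-a - b + c + d - 1) / 2)

theorem bijOn_oddMap : Set.BijOn oddMap oddSum oddSum := by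
  have h : ∀ x ∈ oddSum, oddMap x ∈ oddSum ∧ oddMap (oddMap x) = x := by
    rintro ⟨⟨⟨a, b⟩, c⟩, d⟩ hx
    simp only [oddMap, mem_oddSum, Prod.mk.injEq] at hx ⊢
    omega
  exact Set.InvOn.bijOn ⟨fun x hx => (h x hx).2, fun x hx => (h x hx).2⟩
    (fun x hx => (h x hx).1) (fun x hx => (h x hx).1)

theorem bijOn_evenMap : Set.BijOn evenMap oddSumᶜ oddSumᶜ := by
  have h : ∀ x ∈ oddSumᶜ, evenMap x ∈ oddSumᶜ ∧ evenMap (evenMap x) = x := by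
    rintro ⟨⟨⟨a, b⟩, c⟩, d⟩ hx
    simp only [evenMap, Set.mem_compl_iff, mem_oddSum, Prod.mk.injEq] at hx ⊢
    omega
  exact Set.InvOn.bijOn ⟨fun x hx => (h x hx).2, fun x hx => (h x hx).2⟩
    (fun x hx => (h x hx).1) (fun x hx => (h x hx).1)

theorem bijOn_evenToOdd : Set.BijOn evenToOdd oddSumᶜ oddSum := by
  refine Set.InvOn.bijOn (f' := oddToEven) ⟨?_, ?_⟩ ?_ ?_ <;>
  · rintro ⟨⟨⟨a, b⟩, c⟩, d⟩ hx
    simp only [evenToOdd, oddToEven, Set.mem_compl_iff, mem_oddSum, Prod.mk.injEq] at hx ⊢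
    omega

variable (τ z : ℂ)

theorem termB_oddMap {x : IntQuad} (hx : x ∈ oddSum) : termB τ z (oddMap x) = termA τ z x := by
  obtain ⟨⟨⟨a, b⟩, c⟩, d⟩ := x
  rw [mem_oddSum] at hx
  exact termB_eq_termA τ z (by omega) (by omega) (by omega) (by omega)

theorem termC_evenMap {x : IntQuad} (hx : x ∈ oddSumᶜ) :
    termC τ z (evenMap x) = termB τ z x := by
  obtain ⟨⟨⟨a, b⟩, c⟩, d⟩ := x
  rw [Set.mem_compl_iff, mem_oddSum] at hx
  exact termC_eq_termB τ z (by omega) (by omega) (by omega) (by omega)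

theorem termC_evenToOdd {x : IntQuad} (hx : x ∈ oddSumᶜ) :
    termC τ z (evenToOdd x) = -termA τ z x := by
  obtain ⟨⟨⟨a, b⟩, c⟩, d⟩ := x
  rw [Set.mem_compl_iff, mem_oddSum] at hx
  exact termC_eq_neg_termA τ z (by omega) (by omega) (by omega) (by omega)

end ThetaRelation

open ThetaRelation in
theorem stmt_2 (z τ : ℂ) (hτ : 0 < τ.im) :
    thetaChar 1 (3/4) 0 τ ^ 2 * thetaChar 1 (1/4) z τ * thetaChar 1 (7/4) z τ
      - thetaChar 1 (1/4) 0 τ ^ 2 * thetaChar 1 (3/4) z τ * thetaChar 1 (5/4) z τ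
      + thetaChar 1 0 0 τ * thetaChar 1 (1/2) 0 τ * thetaChar 1 1 z τ ^ 2 = 0 := by
  have split : ∀ f : IntQuad → ℂ, Summable f →
      ∑' x, f x = ∑' x : oddSum, f x + ∑' x : ↑oddSumᶜ, f x :=
    fun f hf => ((hf.subtype _).tsum_add_tsum_compl (hf.subtype _)).symm
  have oddA_eq_oddB : ∑' x : oddSum, termA τ z x = ∑' x : oddSum, termB τ z x :=
    tsum_subtype_eq_of_bijOn bijOn_oddMap fun _ => termB_oddMap τ z
  have evenB_eq_evenC : ∑' x : ↑oddSumᶜ, termB τ z x = ∑' x : ↑oddSumᶜ, termC τ z x :=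
    tsum_subtype_eq_of_bijOn bijOn_evenMap fun _ => termC_evenMap τ z
  have evenA_eq_neg_oddC : ∑' x : ↑oddSumᶜ, termA τ z x = ∑' x : oddSum, -termC τ z x :=
    tsum_subtype_eq_of_bijOn (g := (-termC τ z ·)) bijOn_evenToOdd fun _ hx =>
      neg_eq_iff_eq_neg.mpr (termC_evenToOdd τ z hx)
  rw [← tsum_termA hτ, ← tsum_termB hτ, ← tsum_termC hτ,
    split (termA τ z) (summable_quadProd_term hτ ..),
    split (termB τ z) (summable_quadProd_term hτ ..),
    split (termC τ z) (summable_quadProd_term hτ ..),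
    oddA_eq_oddB, evenB_eq_evenC, evenA_eq_neg_oddC, tsum_neg]
  ring
end

section
/- For every z ∈ ℂ and every τ in the upper half-plane, θ[1;3/5]²·θ[1;1/5](z,τ)·θ[1;9/5](z,τ) − θ[1;1/5]²·θ[1;3/5](z,τ)·θ[1;7/5](z,τ) + θ[1;1/5]·θ[1;3/5]·θ[1;1](z,τ)² = 0. -/
/-!
Write `θ` for `jacobiTheta₂`. With `v = z + τ / 2`, every `thetaChar 1 (k/5) z τ` is an
exponential factor times `θ (v + k/10) τ`, and the identity becomes `G τ v = 0` for the
combination `G = thetaCombination` of products `θ (v + b) τ * θ (v - b) τ`. The product formula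
`θ (w + b) τ * θ (w - b) τ = θ (2w) (2τ) θ (2b) (2τ) + e^{2πi(w+b)+πiτ} θ (2w+τ) (2τ) θ (2b+τ) (2τ)`
puts `G τ` in the two-dimensional space spanned by `θ (2v) (2τ)` and `e^{2πiv} θ (2v+τ) (2τ)`.
Because `θ` vanishes at `τ/2 + 1/2`, `G τ` vanishes at `v = τ/2 + 1/5` and `v = τ/2 + 2/5`.
For `1 ≤ im τ` these two evaluations are independent on that space: each theta value is within
`2r/(1-r)`, `r = e^{-2π im τ}`, of its one or two leading terms, and the leading terms form a
matrix in fifth roots of unity whose determinant has real part `cos (4π/5) - 1 ≤ -1`.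
So `G τ = 0` there, and the identity extends to the whole upper half-plane by analytic
continuation in `τ`.
-/

open Complex

open Real

lemma thetaChar_eq_jacobiTheta₂ (ε ε' : ℝ) (ζ τ : ℂ) :
    thetaChar ε ε' ζ τ = cexp (π * I * ((ε / 2) ^ 2 * τ + ε * (ζ + ε' / 2))) *
      jacobiTheta₂ (ζ + ε' / 2 + ε / 2 * τ) τ := by
  rw [thetaChar, jacobiTheta₂, ← tsum_mul_left]
  refine tsum_congr fun n => ?_
  rw [jacobiTheta₂_term, ← Complex.exp_add]
  ring_nf

@[fun_prop]
lemma differentiableAt_thetaChar (ε ε' : ℝ) (ζ : ℂ) {τ : ℂ} (hτ : 0 < τ.im) :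
    DifferentiableAt ℂ (thetaChar ε ε' ζ) τ := by
  have hθ : DifferentiableAt ℂ (fun t => jacobiTheta₂ (ζ + ε' / 2 + ε / 2 * t) t) τ :=
    (hasFDerivAt_jacobiTheta₂ _ hτ).differentiableAt.comp (f := fun t => (_, t)) τ (by fun_prop)
  simp only [funext (thetaChar_eq_jacobiTheta₂ ε ε' ζ)]
  exact (by fun_prop : DifferentiableAt ℂ _ τ).mul hθ

lemma jacobiTheta₂_half_sub (c τ : ℂ) :
    jacobiTheta₂ (τ / 2 - c) τ = cexp (2 * π * I * c) * jacobiTheta₂ (τ / 2 + c) τ := by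
  rw [← jacobiTheta₂_neg_left, ← neg_sub, neg_neg]
  have := jacobiTheta₂_add_left' (c - τ / 2) τ
  rw [show c - τ / 2 + τ = τ / 2 + c by ring] at this
  rw [this, ← mul_assoc, ← Complex.exp_add]
  ring_nf
  simp

lemma jacobiTheta₂_half_add_half (τ : ℂ) : jacobiTheta₂ (τ / 2 + 1 / 2) τ = 0 := by
  have h := jacobiTheta₂_half_sub (1 / 2) τ
  rw [show τ / 2 - 1 / 2 = τ / 2 + 1 / 2 - 1 by ring, ← jacobiTheta₂_add_left, sub_add_cancel,
    show 2 * (π : ℂ) * I * (1 / 2) = π * I by ring, Complex.exp_pi_mul_I] at h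
  linear_combination h / 2

lemma hasSum_jacobiTheta₂_term_mul {τ : ℂ} (hτ : 0 < τ.im) (z₁ z₂ : ℂ) :
    HasSum (fun p : ℤ × ℤ => jacobiTheta₂_term p.1 z₁ τ * jacobiTheta₂_term p.2 z₂ τ)
      (jacobiTheta₂ z₁ τ * jacobiTheta₂ z₂ τ) := by
  have h₁ := ((summable_jacobiTheta₂_term_iff z₁ τ).mpr hτ).norm
  have h₂ := ((summable_jacobiTheta₂_term_iff z₂ τ).mpr hτ).norm
  rw [jacobiTheta₂, jacobiTheta₂, tsum_mul_tsum_of_summable_norm h₁ h₂]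
  exact (summable_mul_of_summable_norm h₁ h₂).hasSum

def sumDiffEquiv : (ℤ × ℤ) ⊕ (ℤ × ℤ) ≃ ℤ × ℤ where
  toFun
    | .inl p => (p.1 + p.2, p.1 - p.2)
    | .inr p => (p.1 + p.2 + 1, p.1 - p.2)
  invFun q := if (q.1 + q.2) % 2 = 0 then .inl ((q.1 + q.2) / 2, (q.1 - q.2) / 2)
    else .inr ((q.1 + q.2 - 1) / 2, (q.1 - q.2 - 1) / 2)
  left_inv := by
    rintro (⟨j, k⟩ | ⟨j, k⟩)
    · dsimp only; rw [if_pos (by omega)]; congr 2 <;> omega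
    · dsimp only; rw [if_neg (by omega)]; congr 2 <;> omega
  right_inv := by
    rintro ⟨m, n⟩
    by_cases h : (m + n) % 2 = 0
    · simp only [if_pos h]; congr 1 <;> omega
    · simp only [if_neg h]; congr 1 <;> omega

theorem jacobiTheta₂_add_mul_jacobiTheta₂_sub {τ : ℂ} (hτ : 0 < τ.im) (w b : ℂ) :
    jacobiTheta₂ (w + b) τ * jacobiTheta₂ (w - b) τ =
      jacobiTheta₂ (2 * w) (2 * τ) * jacobiTheta₂ (2 * b) (2 * τ) +
      cexp (2 * π * I * (w + b) + π * I * τ) *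
        (jacobiTheta₂ (2 * w + τ) (2 * τ) * jacobiTheta₂ (2 * b + τ) (2 * τ)) := by
  have h2τ : 0 < (2 * τ).im := by simpa using hτ
  refine (hasSum_jacobiTheta₂_term_mul hτ (w + b) (w - b)).unique
    (sumDiffEquiv.hasSum_iff.mp (HasSum.sum ?_ ?_))
  · refine (hasSum_jacobiTheta₂_term_mul h2τ (2 * w) (2 * b)).congr_fun fun ⟨j, k⟩ => ?_
    simp only [Function.comp_apply, sumDiffEquiv, Equiv.coe_fn_mk, jacobiTheta₂_term,
      ← Complex.exp_add]
    push_cast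
    ring_nf
  · refine ((hasSum_jacobiTheta₂_term_mul h2τ (2 * w + τ) (2 * b + τ)).mul_left
      (cexp (2 * π * I * (w + b) + π * I * τ))).congr_fun fun ⟨j, k⟩ => ?_
    simp only [Function.comp_apply, sumDiffEquiv, Equiv.coe_fn_mk, jacobiTheta₂_term,
      ← Complex.exp_add]
    push_cast
    ring_nf

lemma norm_jacobiTheta₂_term_le_pow {n : ℤ} {z τ : ℂ}
    (h : |(n : ℝ)| * τ.im ≤ n ^ 2 * τ.im + 2 * n * z.im) :
    ‖jacobiTheta₂_term n z τ‖ ≤ rexp (-π * τ.im) ^ n.natAbs := by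
  rw [norm_jacobiTheta₂_term, ← Real.exp_nat_mul, Real.exp_le_exp, Nat.cast_natAbs, Int.cast_abs]
  nlinarith [mul_le_mul_of_nonneg_left h pi_pos.le]

lemma hasSum_ite_eq_zero_pow_natAbs {r : ℝ} (hr0 : 0 ≤ r) (hr1 : r < 1) :
    HasSum (fun n : ℤ => if n = 0 then 0 else r ^ n.natAbs) (2 * r / (1 - r)) := by
  have hgeom : HasSum (fun n : ℕ => r ^ (n + 1)) (r / (1 - r)) := by
    simpa [pow_succ', div_eq_mul_inv] using (hasSum_geometric_of_lt_one hr0 hr1).mul_left r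
  rw [show 2 * r / (1 - r) = r / (1 - r) + r / (1 - r) by ring]
  refine HasSum.of_nat_of_neg_add_one ((hasSum_nat_add_iff' 1).mp ?_) ?_
  · rw [Finset.sum_range_one, Nat.cast_zero, if_pos rfl, sub_zero]
    refine hgeom.congr_fun fun n => ?_
    rw [if_neg (by omega)]
    rfl
  · refine hgeom.congr_fun fun n => ?_
    rw [if_neg (by omega)]
    congr 1

lemma norm_tsum_sub_sum_le_geometric {f : ℤ → ℂ} (hf : Summable f) {S : Finset ℤ} (hS : 0 ∈ S)
    {r : ℝ} (hr0 : 0 ≤ r) (hr1 : r < 1) (h : ∀ n ∉ S, ‖f n‖ ≤ r ^ n.natAbs) :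
    ‖∑' n, f n - ∑ n ∈ S, f n‖ ≤ 2 * r / (1 - r) := by
  classical
  have hsumS : HasSum (fun n => if n ∈ S then f n else 0) (∑ n ∈ S, f n) := by
    rw [← Finset.sum_congr rfl fun n hn => if_pos hn]
    exact hasSum_sum_of_ne_finset_zero fun n hn => if_neg hn
  have hrest : HasSum (fun n => if n ∈ S then 0 else f n) (∑' n, f n - ∑ n ∈ S, f n) :=
    (hf.hasSum.sub hsumS).congr_fun fun n => by split_ifs <;> simp
  have hbound : ∀ n, ‖if n ∈ S then 0 else f n‖ ≤ if n = 0 then 0 else r ^ n.natAbs := by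
    intro n
    by_cases hn : n ∈ S
    · rw [if_pos hn, norm_zero]; split_ifs <;> positivity
    · rw [if_neg hn, if_neg (ne_of_mem_of_not_mem hS hn).symm]
      exact h n hn
  have hgeom := hasSum_ite_eq_zero_pow_natAbs hr0 hr1
  rw [← hrest.tsum_eq]
  exact tsum_of_norm_bounded hgeom hbound

lemma norm_jacobiTheta₂_ofReal_sub_one_le (x : ℝ) {τ : ℂ} (hτ : 0 < τ.im) :
    ‖jacobiTheta₂ x τ - 1‖ ≤ 2 * rexp (-π * τ.im) / (1 - rexp (-π * τ.im)) := by
  have hr : rexp (-π * τ.im) < 1 := Real.exp_lt_one_iff.mpr (by nlinarith [pi_pos])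
  have h := norm_tsum_sub_sum_le_geometric ((summable_jacobiTheta₂_term_iff x τ).mpr hτ)
    (Finset.mem_singleton_self 0) (Real.exp_pos _).le hr fun n _ => ?_
  · rwa [Finset.sum_singleton, jacobiTheta₂_term, Int.cast_zero, mul_zero, zero_mul,
      zero_pow two_ne_zero, mul_zero, zero_mul, add_zero, Complex.exp_zero] at h
  refine norm_jacobiTheta₂_term_le_pow ?_
  have hn : |(n : ℝ)| ≤ (n : ℝ) ^ 2 := by
    rw [← Int.cast_abs, ← Int.cast_pow]; exact_mod_cast Int.le_self_sq |n| |>.trans_eq (sq_abs n)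
  simp only [ofReal_im, mul_zero, add_zero]
  exact mul_le_mul_of_nonneg_right hn hτ.le

lemma norm_jacobiTheta₂_ofReal_add_half_sub_le (x : ℝ) {τ : ℂ} (hτ : 0 < τ.im) :
    ‖jacobiTheta₂ (x + τ / 2) τ - (1 + cexp (-2 * π * I * x))‖ ≤
      2 * rexp (-π * τ.im) / (1 - rexp (-π * τ.im)) := by
  have hr : rexp (-π * τ.im) < 1 := Real.exp_lt_one_iff.mpr (by nlinarith [pi_pos])
  have h := norm_tsum_sub_sum_le_geometric ((summable_jacobiTheta₂_term_iff (x + τ / 2) τ).mpr hτ)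
    (S := {0, -1}) (by simp) (Real.exp_pos _).le hr fun n hn => ?_
  · have hmain : ∑ n ∈ {0, -1}, jacobiTheta₂_term n (x + τ / 2) τ = 1 + cexp (-2 * π * I * x) := by
      rw [Finset.sum_pair (by norm_num), jacobiTheta₂_term, jacobiTheta₂_term]
      push_cast
      ring_nf
      simp
    rwa [hmain] at h
  refine norm_jacobiTheta₂_term_le_pow ?_
  simp only [Finset.mem_insert, Finset.mem_singleton, not_or] at hn
  have hn' : |(n : ℝ)| ≤ (n : ℝ) ^ 2 + n := by
    rcases (by omega : 1 ≤ n ∨ n ≤ -2) with h1 | h2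
    · have : (1 : ℝ) ≤ n := by exact_mod_cast h1
      rw [abs_of_pos (by linarith)]; nlinarith
    · have : (n : ℝ) ≤ -2 := by exact_mod_cast h2
      rw [abs_of_neg (by linarith)]; nlinarith
  simp only [add_im, ofReal_im, div_ofNat_im, zero_add]
  nlinarith [mul_le_mul_of_nonneg_right hn' hτ.le]

lemma eq_zero_of_norm_le_of_norm_det_gt {a b c d x y : ℂ} {ε : ℝ}
    (hdet : ε * (‖a‖ + ‖b‖ + ‖c‖ + ‖d‖) < ‖a * d - b * c‖)
    (h₁ : ‖a * x + b * y‖ ≤ ε * (‖x‖ + ‖y‖)) (h₂ : ‖c * x + d * y‖ ≤ ε * (‖x‖ + ‖y‖)) :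
    x = 0 ∧ y = 0 := by
  have bound : ∀ p q u v : ℂ, ‖u‖ ≤ ε * (‖x‖ + ‖y‖) → ‖v‖ ≤ ε * (‖x‖ + ‖y‖) →
      ‖p * u - q * v‖ ≤ (‖p‖ + ‖q‖) * (ε * (‖x‖ + ‖y‖)) := fun p q u v hu hv => by
    refine (norm_sub_le _ _).trans ?_
    rw [norm_mul, norm_mul, add_mul]
    gcongr
  -- Cramer's rule
  have hx : ‖a * d - b * c‖ * ‖x‖ ≤ (‖d‖ + ‖b‖) * (ε * (‖x‖ + ‖y‖)) := by
    rw [← norm_mul, show (a * d - b * c) * x = d * (a * x + b * y) - b * (c * x + d * y) by ring]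
    exact bound _ _ _ _ h₁ h₂
  have hy : ‖a * d - b * c‖ * ‖y‖ ≤ (‖a‖ + ‖c‖) * (ε * (‖x‖ + ‖y‖)) := by
    rw [← norm_mul, show (a * d - b * c) * y = a * (c * x + d * y) - c * (a * x + b * y) by ring]
    exact bound _ _ _ _ h₂ h₁
  have hxy : ‖x‖ + ‖y‖ ≤ 0 := by nlinarith [norm_nonneg x, norm_nonneg y]
  constructor <;> apply norm_eq_zero.mp <;> linarith [norm_nonneg x, norm_nonneg y]

lemma norm_leading_terms_le {τ : ℂ} (hτ : 0 < τ.im) (x : ℝ) {γ₀ γ₁ : ℂ}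
    (h : γ₀ * jacobiTheta₂ (2 * (τ / 2 + x)) (2 * τ) +
      γ₁ * (cexp (2 * π * I * (τ / 2 + x)) * jacobiTheta₂ (2 * (τ / 2 + x) + τ) (2 * τ)) = 0) :
    ‖(1 + cexp (-4 * π * I * x)) * γ₀ + cexp (-2 * π * I * x) * (γ₁ * cexp (-π * I * τ))‖ ≤
      2 * rexp (-2 * π * τ.im) / (1 - rexp (-2 * π * τ.im)) *
        (‖γ₀‖ + ‖γ₁ * cexp (-π * I * τ)‖) := by
  have h2τ : 0 < (2 * τ).im := by simpa using hτ
  have hr : -π * (2 * τ).im = -2 * π * τ.im := by simp; ring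
  have hP := norm_jacobiTheta₂_ofReal_add_half_sub_le (2 * x) h2τ
  have hQ := norm_jacobiTheta₂_ofReal_sub_one_le (2 * x) h2τ
  rw [hr, ← show cexp (-4 * π * I * x) = cexp (-2 * π * I * (2 * x : ℝ)) by push_cast; ring_nf]
    at hP
  rw [hr] at hQ
  set P := jacobiTheta₂ ((2 * x : ℝ) + 2 * τ / 2) (2 * τ)
  set Q := jacobiTheta₂ (2 * x : ℝ) (2 * τ)
  set e := cexp (-2 * π * I * x)
  set δ := γ₁ * cexp (-π * I * τ)
  have hP' : jacobiTheta₂ (2 * (τ / 2 + x)) (2 * τ) = P := by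
    congr 1; push_cast; ring
  have hQ' : cexp (2 * π * I * (τ / 2 + x)) * jacobiTheta₂ (2 * (τ / 2 + x) + τ) (2 * τ) =
      cexp (-π * I * τ) * e * Q := by
    rw [show 2 * (τ / 2 + x) + τ = (2 * x : ℝ) + 2 * τ by push_cast; ring, jacobiTheta₂_add_left',
      ← mul_assoc, ← Complex.exp_add, ← Complex.exp_add]
    congr 2
    push_cast
    ring
  rw [hP', hQ'] at h
  rw [show (1 + cexp (-4 * π * I * x)) * γ₀ + e * δ =
      γ₀ * ((1 + cexp (-4 * π * I * x)) - P) - δ * e * (Q - 1) by linear_combination h]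
  refine (norm_sub_le _ _).trans ?_
  have he : ‖e‖ = 1 := by rw [Complex.norm_exp]; simp
  rw [norm_mul, norm_mul, norm_mul δ, he, mul_one, norm_sub_rev, mul_add]
  linarith [mul_le_mul_of_nonneg_left hP (norm_nonneg γ₀),
    mul_le_mul_of_nonneg_left hQ (norm_nonneg δ)]

namespace ThetaFifths

noncomputable def ξ : ℂ := cexp (-2 * π * I / 5)

lemma norm_ξ_pow (k : ℕ) : ‖ξ ^ k‖ = 1 := by
  rw [ξ, norm_pow, Complex.norm_exp]
  simp

lemma re_ξ_pow (k : ℕ) : (ξ ^ k).re = Real.cos (2 * π * k / 5) := by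
  rw [ξ, ← Complex.exp_nat_mul,
    show (k : ℂ) * (-2 * π * I / 5) = ((-(2 * π * k / 5) : ℝ) : ℂ) * I by push_cast; ring,
    exp_ofReal_mul_I_re, Real.cos_neg]

lemma cexp_eq_ξ_pow (k : ℕ) (x : ℝ) (hx : (x : ℂ) = k / 5) : cexp (-2 * π * I * x) = ξ ^ k := by
  rw [ξ, ← Complex.exp_nat_mul, hx]
  ring_nf

lemma one_le_norm_det : 1 ≤ ‖(1 + ξ ^ 2) * ξ ^ 2 - ξ * (1 + ξ ^ 4)‖ := by
  have hcos : Real.cos (2 * π * (2 : ℕ) / 5) ≤ 0 :=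
    Real.cos_nonpos_of_pi_div_two_le_of_le (by push_cast; nlinarith [pi_pos])
      (by push_cast; nlinarith [pi_pos])
  have h4 : Real.cos (2 * π * (4 : ℕ) / 5) = Real.cos (2 * π * (1 : ℕ) / 5) := by
    rw [show 2 * π * (4 : ℕ) / 5 = 2 * π - 2 * π * (1 : ℕ) / 5 by push_cast; ring,
      Real.cos_two_pi_sub]
  have h5 : Real.cos (2 * π * (5 : ℕ) / 5) = 1 := by
    rw [show 2 * π * (5 : ℕ) / 5 = 2 * π by push_cast; ring, Real.cos_two_pi]
  have hre : ((1 + ξ ^ 2) * ξ ^ 2 - ξ * (1 + ξ ^ 4)).re ≤ -1 := by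
    rw [show (1 + ξ ^ 2) * ξ ^ 2 - ξ * (1 + ξ ^ 4) = ξ ^ 2 + ξ ^ 4 - ξ ^ 1 - ξ ^ 5 by ring]
    simp only [sub_re, add_re, re_ξ_pow, h4, h5]
    linarith
  exact (abs_re_le_norm _).trans' (by rw [abs_of_neg (by linarith)]; linarith)

lemma norm_entries_le : ‖1 + ξ ^ 2‖ + ‖ξ‖ + ‖1 + ξ ^ 4‖ + ‖ξ ^ 2‖ ≤ 6 := by
  have h₂ := norm_add_le 1 (ξ ^ 2)
  have h₄ := norm_add_le 1 (ξ ^ 4)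
  have h₁ := norm_ξ_pow 1
  rw [pow_one] at h₁
  rw [norm_one, norm_ξ_pow] at h₂ h₄
  rw [h₁, norm_ξ_pow]
  linarith

lemma six_mul_tail_lt_one {t : ℝ} (ht : 1 ≤ t) :
    6 * (2 * rexp (-2 * π * t) / (1 - rexp (-2 * π * t))) < 1 := by
  set r := rexp (-2 * π * t)
  have h13 : 13 * r < 1 := by
    have h6 : 25 ≤ rexp 6 := by nlinarith [Real.quadratic_le_exp_of_nonneg (x := 6) (by norm_num)]
    have hr : r ≤ (rexp 6)⁻¹ := by
      rw [← Real.exp_neg]; exact Real.exp_le_exp.mpr (by nlinarith [pi_gt_three])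
    have := mul_inv_cancel₀ (Real.exp_pos 6).ne'
    nlinarith [Real.exp_pos 6]
  rw [mul_div_assoc', div_lt_one (by linarith [Real.exp_pos (-2 * π * t)])]
  linarith

theorem eq_zero_of_vanish_at_fifths {τ : ℂ} (hτ : 1 ≤ τ.im) {γ₀ γ₁ : ℂ}
    (h₁ : γ₀ * jacobiTheta₂ (2 * (τ / 2 + 1 / 5)) (2 * τ) + γ₁ *
      (cexp (2 * π * I * (τ / 2 + 1 / 5)) * jacobiTheta₂ (2 * (τ / 2 + 1 / 5) + τ) (2 * τ)) = 0)
    (h₂ : γ₀ * jacobiTheta₂ (2 * (τ / 2 + 2 / 5)) (2 * τ) + γ₁ *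
      (cexp (2 * π * I * (τ / 2 + 2 / 5)) * jacobiTheta₂ (2 * (τ / 2 + 2 / 5) + τ) (2 * τ)) = 0) :
    γ₀ = 0 ∧ γ₁ = 0 := by
  have hτ₀ : 0 < τ.im := by linarith
  have e₁ := norm_leading_terms_le hτ₀ (1 / 5) (by push_cast; exact h₁)
  have e₂ := norm_leading_terms_le hτ₀ (2 / 5) (by push_cast; exact h₂)
  rw [show -4 * π * I * ((1 / 5 : ℝ) : ℂ) = -2 * π * I * ((2 / 5 : ℝ) : ℂ) by push_cast; ring,
    cexp_eq_ξ_pow 1 (1 / 5) (by push_cast; ring), cexp_eq_ξ_pow 2 (2 / 5) (by push_cast; ring),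
    pow_one] at e₁
  rw [show -4 * π * I * ((2 / 5 : ℝ) : ℂ) = -2 * π * I * ((4 / 5 : ℝ) : ℂ) by push_cast; ring,
    cexp_eq_ξ_pow 2 (2 / 5) (by push_cast; ring), cexp_eq_ξ_pow 4 (4 / 5) (by push_cast; ring)]
    at e₂
  have hε0 : 0 ≤ 2 * rexp (-2 * π * τ.im) / (1 - rexp (-2 * π * τ.im)) :=
    div_nonneg (by positivity) (sub_nonneg.mpr (Real.exp_le_one_iff.mpr (by nlinarith [pi_pos])))
  have hdet := calc
    2 * rexp (-2 * π * τ.im) / (1 - rexp (-2 * π * τ.im)) *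
        (‖1 + ξ ^ 2‖ + ‖ξ‖ + ‖1 + ξ ^ 4‖ + ‖ξ ^ 2‖)
      ≤ 6 * (2 * rexp (-2 * π * τ.im) / (1 - rexp (-2 * π * τ.im))) := by
        rw [mul_comm 6]; gcongr; exact norm_entries_le
    _ < 1 := six_mul_tail_lt_one hτ
    _ ≤ ‖(1 + ξ ^ 2) * ξ ^ 2 - ξ * (1 + ξ ^ 4)‖ := one_le_norm_det
  obtain ⟨hγ₀, hδ⟩ := eq_zero_of_norm_le_of_norm_det_gt hdet e₁ e₂
  exact ⟨hγ₀, (mul_eq_zero.mp hδ).resolve_right (Complex.exp_ne_zero _)⟩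

noncomputable def ω : ℂ := cexp (π * I / 10)

lemma ω_pow (n : ℕ) : ω ^ n = cexp (π * I * n / 10) := by
  rw [ω, ← Complex.exp_nat_mul]; ring_nf

lemma ω_pow_ten : ω ^ 10 = -1 := by
  rw [ω_pow, show (π : ℂ) * I * (10 : ℕ) / 10 = π * I by push_cast; ring, Complex.exp_pi_mul_I]

lemma jacobiTheta₂_half_sub_eq_ω_pow (τ c : ℂ) (n : ℕ) (hc : 20 * c = n) :
    jacobiTheta₂ (τ / 2 - c) τ = ω ^ n * jacobiTheta₂ (τ / 2 + c) τ := by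
  rw [jacobiTheta₂_half_sub, ω_pow, ← hc]
  ring_nf

noncomputable def thetaCombination (τ v : ℂ) : ℂ :=
  ω ^ 4 * jacobiTheta₂ (τ / 2 + 3 / 10) τ ^ 2 *
      (jacobiTheta₂ (v + 1 / 10) τ * jacobiTheta₂ (v - 1 / 10) τ)
    - jacobiTheta₂ (τ / 2 + 1 / 10) τ ^ 2 *
      (jacobiTheta₂ (v + 3 / 10) τ * jacobiTheta₂ (v - 3 / 10) τ)
    + ω ^ 2 * jacobiTheta₂ (τ / 2 + 3 / 10) τ * jacobiTheta₂ (τ / 2 + 1 / 10) τ *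
      (jacobiTheta₂ (v + 1 / 2) τ * jacobiTheta₂ (v - 1 / 2) τ)

lemma thetaCombination_half_add_one_fifth (τ : ℂ) : thetaCombination τ (τ / 2 + 1 / 5) = 0 := by
  have h₁ : jacobiTheta₂ (τ / 2 + 1 / 5 + 1 / 2) τ = ω ^ 6 * jacobiTheta₂ (τ / 2 + 3 / 10) τ := by
    rw [show τ / 2 + 1 / 5 + 1 / 2 = τ / 2 - 3 / 10 + 1 by ring, jacobiTheta₂_add_left,
      jacobiTheta₂_half_sub_eq_ω_pow τ _ 6 (by norm_num)]
  have h₂ : jacobiTheta₂ (τ / 2 + 1 / 5 - 1 / 2) τ = ω ^ 6 * jacobiTheta₂ (τ / 2 + 3 / 10) τ := by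
    rw [show τ / 2 + 1 / 5 - 1 / 2 = τ / 2 - 3 / 10 by ring,
      jacobiTheta₂_half_sub_eq_ω_pow τ _ 6 (by norm_num)]
  rw [thetaCombination, h₁, h₂, show τ / 2 + 1 / 5 + 3 / 10 = τ / 2 + 1 / 2 by ring,
    jacobiTheta₂_half_add_half,
    show τ / 2 + 1 / 5 + 1 / 10 = τ / 2 + 3 / 10 by ring,
    show τ / 2 + 1 / 5 - 1 / 10 = τ / 2 + 1 / 10 by ring]
  linear_combination (ω ^ 4 * jacobiTheta₂ (τ / 2 + 3 / 10) τ ^ 3 *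
    jacobiTheta₂ (τ / 2 + 1 / 10) τ) * ω_pow_ten

lemma thetaCombination_half_add_two_fifths (τ : ℂ) : thetaCombination τ (τ / 2 + 2 / 5) = 0 := by
  have h₁ : jacobiTheta₂ (τ / 2 + 2 / 5 + 3 / 10) τ = ω ^ 6 * jacobiTheta₂ (τ / 2 + 3 / 10) τ := by
    rw [show τ / 2 + 2 / 5 + 3 / 10 = τ / 2 - 3 / 10 + 1 by ring, jacobiTheta₂_add_left,
      jacobiTheta₂_half_sub_eq_ω_pow τ _ 6 (by norm_num)]
  have h₂ : jacobiTheta₂ (τ / 2 + 2 / 5 + 1 / 2) τ = ω ^ 2 * jacobiTheta₂ (τ / 2 + 1 / 10) τ := by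
    rw [show τ / 2 + 2 / 5 + 1 / 2 = τ / 2 - 1 / 10 + 1 by ring, jacobiTheta₂_add_left,
      jacobiTheta₂_half_sub_eq_ω_pow τ _ 2 (by norm_num)]
  have h₃ : jacobiTheta₂ (τ / 2 + 2 / 5 - 1 / 2) τ = ω ^ 2 * jacobiTheta₂ (τ / 2 + 1 / 10) τ := by
    rw [show τ / 2 + 2 / 5 - 1 / 2 = τ / 2 - 1 / 10 by ring,
      jacobiTheta₂_half_sub_eq_ω_pow τ _ 2 (by norm_num)]
  rw [thetaCombination, h₁, h₂, h₃, show τ / 2 + 2 / 5 + 1 / 10 = τ / 2 + 1 / 2 by ring,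
    jacobiTheta₂_half_add_half,
    show τ / 2 + 2 / 5 - 3 / 10 = τ / 2 + 1 / 10 by ring]
  ring

lemma exists_thetaCombination_eq {τ : ℂ} (hτ : 0 < τ.im) :
    ∃ γ₀ γ₁ : ℂ, ∀ v, thetaCombination τ v = γ₀ * jacobiTheta₂ (2 * v) (2 * τ) +
      γ₁ * (cexp (2 * π * I * v) * jacobiTheta₂ (2 * v + τ) (2 * τ)) := by
  set c : ℂ → ℂ := fun b => jacobiTheta₂ (2 * b) (2 * τ)
  set d : ℂ → ℂ := fun b => cexp (2 * π * I * b + π * I * τ) * jacobiTheta₂ (2 * b + τ) (2 * τ)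
  have hprod : ∀ v b, jacobiTheta₂ (v + b) τ * jacobiTheta₂ (v - b) τ =
      c b * jacobiTheta₂ (2 * v) (2 * τ) +
        d b * (cexp (2 * π * I * v) * jacobiTheta₂ (2 * v + τ) (2 * τ)) := fun v b => by
    rw [jacobiTheta₂_add_mul_jacobiTheta₂_sub hτ,
      show 2 * π * I * (v + b) + π * I * τ = 2 * π * I * v + (2 * π * I * b + π * I * τ) by ring,
      Complex.exp_add]
    ring
  set A := jacobiTheta₂ (τ / 2 + 3 / 10) τ
  set B := jacobiTheta₂ (τ / 2 + 1 / 10) τ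
  exact ⟨ω ^ 4 * A ^ 2 * c (1 / 10) - B ^ 2 * c (3 / 10) + ω ^ 2 * A * B * c (1 / 2),
    ω ^ 4 * A ^ 2 * d (1 / 10) - B ^ 2 * d (3 / 10) + ω ^ 2 * A * B * d (1 / 2),
    fun v => by simp only [thetaCombination, hprod]; ring⟩

lemma thetaCombination_eq_zero {τ : ℂ} (hτ : 1 ≤ τ.im) (v : ℂ) : thetaCombination τ v = 0 := by
  obtain ⟨γ₀, γ₁, hG⟩ := exists_thetaCombination_eq (τ := τ) (by linarith)
  obtain ⟨rfl, rfl⟩ := eq_zero_of_vanish_at_fifths hτ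
    ((hG _).symm.trans (thetaCombination_half_add_one_fifth τ))
    ((hG _).symm.trans (thetaCombination_half_add_two_fifths τ))
  simpa using hG v

lemma thetaChar_one_eq (z τ : ℂ) (c : ℝ) (k : ℕ) (hc : (c : ℂ) = k / 5) (v : ℂ)
    (hv : v = z + τ / 2 + k / 10) :
    thetaChar 1 c z τ = cexp (π * I * (τ / 4 + z)) * ω ^ k * jacobiTheta₂ v τ := by
  rw [thetaChar_eq_jacobiTheta₂, ω_pow, ← Complex.exp_add, hv, hc]
  push_cast
  ring_nf

lemma thetaChar_identity_of_one_le_im (z τ : ℂ) (hτ : 1 ≤ τ.im) :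
    thetaChar 1 (3/5) 0 τ ^ 2 * thetaChar 1 (1/5) z τ * thetaChar 1 (9/5) z τ
      - thetaChar 1 (1/5) 0 τ ^ 2 * thetaChar 1 (3/5) z τ * thetaChar 1 (7/5) z τ
      + thetaChar 1 (1/5) 0 τ * thetaChar 1 (3/5) 0 τ * thetaChar 1 1 z τ ^ 2 = 0 := by
  set v := z + τ / 2
  rw [thetaChar_one_eq 0 τ (3/5) 3 (by push_cast; ring) (τ / 2 + 3 / 10) (by push_cast; ring),
    thetaChar_one_eq 0 τ (1/5) 1 (by push_cast; ring) (τ / 2 + 1 / 10) (by push_cast; ring),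
    thetaChar_one_eq z τ (1/5) 1 (by push_cast; ring) (v + 1 / 10) (by push_cast; ring),
    thetaChar_one_eq z τ (3/5) 3 (by push_cast; ring) (v + 3 / 10) (by push_cast; ring),
    thetaChar_one_eq z τ (9/5) 9 (by push_cast; ring) (v - 1 / 10 + 1) (by push_cast; ring),
    thetaChar_one_eq z τ (7/5) 7 (by push_cast; ring) (v - 3 / 10 + 1) (by push_cast; ring),
    thetaChar_one_eq z τ 1 5 (by push_cast; ring) (v - 1 / 2 + 1) (by push_cast; ring),
    jacobiTheta₂_add_left, jacobiTheta₂_add_left, jacobiTheta₂_add_left]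
  have hG := thetaCombination_eq_zero hτ v
  rw [thetaCombination, show v + 1 / 2 = v - 1 / 2 + 1 by ring, jacobiTheta₂_add_left] at hG
  linear_combination (cexp (π * I * (τ / 4 + 0)) ^ 2 * cexp (π * I * (τ / 4 + z)) ^ 2 * ω ^ 12) * hG

end ThetaFifths

theorem stmt_3 (z τ : ℂ) (hτ : 0 < τ.im) :
    thetaChar 1 (3/5) 0 τ ^ 2 * thetaChar 1 (1/5) z τ * thetaChar 1 (9/5) z τ
      - thetaChar 1 (1/5) 0 τ ^ 2 * thetaChar 1 (3/5) z τ * thetaChar 1 (7/5) z τ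
      + thetaChar 1 (1/5) 0 τ * thetaChar 1 (3/5) 0 τ * thetaChar 1 1 z τ ^ 2 = 0 := by
  have hopen : ∀ a : ℝ, IsOpen {t : ℂ | a < t.im} := fun _ =>
    isOpen_lt continuous_const continuous_im
  have hanalytic : AnalyticOnNhd ℂ (fun t =>
      thetaChar 1 (3/5) 0 t ^ 2 * thetaChar 1 (1/5) z t * thetaChar 1 (9/5) z t
      - thetaChar 1 (1/5) 0 t ^ 2 * thetaChar 1 (3/5) z t * thetaChar 1 (7/5) z t
      + thetaChar 1 (1/5) 0 t * thetaChar 1 (3/5) 0 t * thetaChar 1 1 z t ^ 2) {t | 0 < t.im} :=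
    DifferentiableOn.analyticOnNhd (fun t ht =>
      (by fun_prop (disch := exact ht) : DifferentiableAt ℂ _ t).differentiableWithinAt) (hopen 0)
  refine hanalytic.eqOn_zero_of_preconnected_of_eventuallyEq_zero
    (convex_halfSpace_im_gt 0).isPreconnected (z₀ := 2 * I) (by simp) ?_ hτ
  filter_upwards [(hopen 1).mem_nhds (show (1 : ℝ) < (2 * I).im by simp)] with t ht
  exact ThetaFifths.thetaChar_identity_of_one_le_im z t ht.le
end

section
/- For every τ in the upper half-plane, θ[1;0]³·θ[1;2/3] − θ[1;1/3]⁴ + θ[1;2/3]⁴ = 0, where all theta constants are evaluated at (0,τ). -/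
open Complex

namespace Stmt9

noncomputable def term (τ : ℂ) (k : ℤ) (n : ℤ) : ℂ :=
  cexp ((Real.pi : ℂ) * I * τ * ((n : ℂ) + 1/2)^2 + (Real.pi : ℂ) * I * (k : ℂ) * ((n : ℂ) + 1/2) / 3)

lemma term_eq_jacobi (τ : ℂ) (k n : ℤ) :
    term τ k n = cexp ((Real.pi : ℂ) * I * τ / 4 + (Real.pi : ℂ) * I * (k : ℂ) / 6) *
      jacobiTheta₂_term n (τ/2 + (k : ℂ)/6) τ := by
  rw [term, jacobiTheta₂_term, ← Complex.exp_add]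
  congr 1
  ring

lemma summable_norm_term {τ : ℂ} (hτ : 0 < τ.im) (k : ℤ) :
    Summable fun n : ℤ => ‖term τ k n‖ := by
  have h : Summable fun n : ℤ => jacobiTheta₂_term n (τ/2 + (k : ℂ)/6) τ :=
    (summable_jacobiTheta₂_term_iff _ τ).mpr hτ
  rw [← summable_norm_iff] at h
  have := h.mul_left ‖cexp ((Real.pi : ℂ) * I * τ / 4 + (Real.pi : ℂ) * I * (k : ℂ) / 6)‖
  simpa [term_eq_jacobi, norm_mul] using this

lemma theta_eq (τ : ℂ) (k : ℤ) :
    thetaChar 1 ((k : ℝ)/3) 0 τ = ∑' n : ℤ, term τ k n := by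
  unfold thetaChar term
  apply tsum_congr
  intro n
  congr 1
  push_cast
  ring

/-- helper : exp of things differing by an integer multiple of 2πi -/
lemma exp_eq_of_sub_int {a b : ℂ} (n : ℤ) (h : a = b + (n : ℂ) * (2 * (Real.pi : ℂ) * I)) :
    cexp a = cexp b := by
  rw [h, Complex.exp_add, Complex.exp_int_mul_two_pi_mul_I, mul_one]

lemma exp_eq_neg_of_sub_odd {a b : ℂ} (n : ℤ)
    (h : a = b + (n : ℂ) * (2 * (Real.pi : ℂ) * I) + (Real.pi : ℂ) * I) :
    cexp a = - cexp b := by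
  rw [h, Complex.exp_add, Complex.exp_add, Complex.exp_int_mul_two_pi_mul_I, Complex.exp_pi_mul_I]
  ring

lemma term_flip {τ : ℂ} {j k : ℤ} (h : j + k = 6) (n : ℤ) :
    term τ j (-1 - n) = - term τ k n := by
  have hC : (j : ℂ) + (k : ℂ) = 6 := by exact_mod_cast congrArg (fun z : ℤ => (z : ℂ)) h
  rw [term, term]
  apply exp_eq_neg_of_sub_odd (-(n+1))
  push_cast
  linear_combination (-(Real.pi : ℂ) * I * ((n : ℂ) + 1/2) / 3) * hC

lemma tsum_term_neg (τ : ℂ) {j k : ℤ} (h : j + k = 6) :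
    (∑' n : ℤ, term τ j n) = - ∑' n : ℤ, term τ k n := by
  calc (∑' n : ℤ, term τ j n) = ∑' n : ℤ, term τ j ((Equiv.subLeft (-1 : ℤ)) n) :=
        (Equiv.tsum_eq (Equiv.subLeft (-1 : ℤ)) (term τ j)).symm
    _ = ∑' n : ℤ, - term τ k n := by
        apply tsum_congr
        intro n
        have : (Equiv.subLeft (-1 : ℤ)) n = -1 - n := rfl
        rw [this, term_flip h]
    _ = - ∑' n : ℤ, term τ k n := tsum_neg

lemma tsum_term_three (τ : ℂ) : (∑' n : ℤ, term τ 3 n) = 0 := by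
  have h := tsum_term_neg τ (j := 3) (k := 3) (by norm_num)
  have h2 : (2 : ℂ) * (∑' n : ℤ, term τ 3 n) = 0 := by linear_combination h
  have := mul_eq_zero.mp h2
  simpa using this

/-- index type for quadruple sums -/
abbrev ι4 : Type := ℤ × ℤ × ℤ × ℤ

noncomputable def gterm (τ : ℂ) (j k l m : ℤ) (v : ι4) : ℂ :=
  term τ j v.1 * (term τ k v.2.1 * (term τ l v.2.2.1 * term τ m v.2.2.2))

lemma summable_norm_gterm {τ : ℂ} (hτ : 0 < τ.im) (j k l m : ℤ) :
    Summable fun v : ι4 => ‖gterm τ j k l m v‖ := by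
  have := (summable_norm_term hτ j).mul_norm
    ((summable_norm_term hτ k).mul_norm
      ((summable_norm_term hτ l).mul_norm (summable_norm_term hτ m)))
  simpa only [gterm] using this

lemma summable_gterm {τ : ℂ} (hτ : 0 < τ.im) (j k l m : ℤ) :
    Summable (gterm τ j k l m) :=
  (summable_norm_gterm hτ j k l m).of_norm

lemma prod4 {τ : ℂ} (hτ : 0 < τ.im) (j k l m : ℤ) :
    (∑' n : ℤ, term τ j n) * ((∑' n : ℤ, term τ k n) *
      ((∑' n : ℤ, term τ l n) * (∑' n : ℤ, term τ m n))) = ∑' v : ι4, gterm τ j k l m v := by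
  rw [tsum_mul_tsum_of_summable_norm (summable_norm_term hτ l) (summable_norm_term hτ m),
    tsum_mul_tsum_of_summable_norm (summable_norm_term hτ k)
      ((summable_norm_term hτ l).mul_norm (summable_norm_term hτ m)),
    tsum_mul_tsum_of_summable_norm (summable_norm_term hτ j)
      ((summable_norm_term hτ k).mul_norm
        ((summable_norm_term hτ l).mul_norm (summable_norm_term hτ m)))]
  apply tsum_congr
  intro v
  simp only [gterm]

lemma gterm_eq (τ : ℂ) (j k l m : ℤ) (v : ι4) :
    gterm τ j k l m v = cexp ((Real.pi : ℂ) * I * τ *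
        (((v.1 : ℂ) + 1/2)^2 + ((v.2.1 : ℂ) + 1/2)^2 + ((v.2.2.1 : ℂ) + 1/2)^2
          + ((v.2.2.2 : ℂ) + 1/2)^2)
      + (Real.pi : ℂ) * I * ((j : ℂ) * ((v.1 : ℂ) + 1/2) + (k : ℂ) * ((v.2.1 : ℂ) + 1/2)
          + (l : ℂ) * ((v.2.2.1 : ℂ) + 1/2) + (m : ℂ) * ((v.2.2.2 : ℂ) + 1/2)) / 3) := by
  rw [gterm, term, term, term, term, ← Complex.exp_add, ← Complex.exp_add, ← Complex.exp_add]
  congr 1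
  ring

/-- the left / right hand side functions for the key bijection step -/
noncomputable def Lf (τ : ℂ) (v : ι4) : ℂ := gterm τ 1 1 1 1 v - gterm τ 4 4 4 4 v
noncomputable def Rf (τ : ℂ) (v : ι4) : ℂ := gterm τ 2 0 0 0 v - gterm τ 5 3 3 3 v

def Tm (v : ι4) : ι4 :=
  ((v.1 + v.2.1 + v.2.2.1 + v.2.2.2 + 1)/2,
   (v.1 + v.2.1 - v.2.2.1 - v.2.2.2 - 1)/2,
   (v.1 - v.2.1 + v.2.2.1 - v.2.2.2 - 1)/2,
   (v.1 - v.2.1 - v.2.2.1 + v.2.2.2 - 1)/2)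

def sOdd (v : ι4) : Prop := (v.1 + v.2.1 + v.2.2.1 + v.2.2.2) % 2 = 1

lemma Tm_sOdd {v : ι4} (h : sOdd v) : sOdd (Tm v) := by
  obtain ⟨a, b, c, d⟩ := v
  have h' : (a + b + c + d) % 2 = 1 := h
  show ((a + b + c + d + 1)/2 + (a + b - c - d - 1)/2 + (a - b + c - d - 1)/2
    + (a - b - c + d - 1)/2) % 2 = 1
  omega

lemma Tm_Tm {v : ι4} (h : sOdd v) : Tm (Tm v) = v := by
  obtain ⟨a, b, c, d⟩ := v
  have h' : (a + b + c + d) % 2 = 1 := h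
  have e1 : 2*((a+b+c+d+1)/2) = a+b+c+d+1 := by omega
  have e2 : 2*((a+b-c-d-1)/2) = a+b-c-d-1 := by omega
  have e3 : 2*((a-b+c-d-1)/2) = a-b+c-d-1 := by omega
  have e4 : 2*((a-b-c+d-1)/2) = a-b-c+d-1 := by omega
  show (_, _, _, _) = ((a : ℤ), (b : ℤ), (c : ℤ), (d : ℤ))
  simp only [Tm, Prod.mk.injEq]
  refine ⟨?_, ?_, ?_, ?_⟩ <;> omega

/-- even sum kills Lf -/
lemma Lf_eq_zero {τ : ℂ} {v : ι4} (h : ¬ sOdd v) : Lf τ v = 0 := by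
  obtain ⟨a, b, c, d⟩ := v
  have h' : ¬ (a + b + c + d) % 2 = 1 := h
  obtain ⟨w, hw⟩ := Int.even_iff.mpr (show (a + b + c + d) % 2 = 0 by omega)
  have hwC : (a : ℂ) + b + c + d = w + w := by exact_mod_cast congrArg (fun z : ℤ => (z : ℂ)) hw
  rw [Lf, gterm_eq, gterm_eq, sub_eq_zero]
  apply exp_eq_of_sub_int (-(w + 1))
  push_cast
  linear_combination (-(Real.pi : ℂ) * I) * hwC

lemma Rf_eq_zero {τ : ℂ} {v : ι4} (h : ¬ sOdd v) : Rf τ v = 0 := by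
  obtain ⟨a, b, c, d⟩ := v
  have h' : ¬ (a + b + c + d) % 2 = 1 := h
  obtain ⟨w, hw⟩ := Int.even_iff.mpr (show (a + b + c + d) % 2 = 0 by omega)
  have hwC : (a : ℂ) + b + c + d = w + w := by exact_mod_cast congrArg (fun z : ℤ => (z : ℂ)) hw
  rw [Rf, gterm_eq, gterm_eq, sub_eq_zero]
  apply exp_eq_of_sub_int (-(w + 1))
  push_cast
  linear_combination (-(Real.pi : ℂ) * I) * hwC

/-- the key pointwise matching under the transformation -/
lemma Lf_Tm {τ : ℂ} {v : ι4} (h : sOdd v) : Lf τ (Tm v) = Rf τ v := by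
  obtain ⟨a, b, c, d⟩ := v
  have h' : (a + b + c + d) % 2 = 1 := h
  have e1 : 2*((a+b+c+d+1)/2) = a+b+c+d+1 := by omega
  have e2 : 2*((a+b-c-d-1)/2) = a+b-c-d-1 := by omega
  have e3 : 2*((a-b+c-d-1)/2) = a-b+c-d-1 := by omega
  have e4 : 2*((a-b-c+d-1)/2) = a-b-c+d-1 := by omega
  have c1 : (((a+b+c+d+1)/2 : ℤ) : ℂ) = ((a : ℂ) + b + c + d + 1)/2 := by
    have := congrArg (fun z : ℤ => (z : ℂ)) e1
    push_cast at this
    linear_combination this / 2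
  have c2 : (((a+b-c-d-1)/2 : ℤ) : ℂ) = ((a : ℂ) + b - c - d - 1)/2 := by
    have := congrArg (fun z : ℤ => (z : ℂ)) e2
    push_cast at this
    linear_combination this / 2
  have c3 : (((a-b+c-d-1)/2 : ℤ) : ℂ) = ((a : ℂ) - b + c - d - 1)/2 := by
    have := congrArg (fun z : ℤ => (z : ℂ)) e3
    push_cast at this
    linear_combination this / 2
  have c4 : (((a-b-c+d-1)/2 : ℤ) : ℂ) = ((a : ℂ) - b - c + d - 1)/2 := by
    have := congrArg (fun z : ℤ => (z : ℂ)) e4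
    push_cast at this
    linear_combination this / 2
  obtain ⟨u, hu⟩ := Int.even_iff.mpr (show (a - b - c - d - 1) % 2 = 0 by omega)
  have huC : (a : ℂ) - b - c - d - 1 = u + u := by
    exact_mod_cast congrArg (fun z : ℤ => (z : ℂ)) hu
  rw [Lf, Rf, gterm_eq, gterm_eq, gterm_eq, gterm_eq]
  show cexp _ - cexp _ = cexp _ - cexp _
  simp only [Tm]
  rw [c1, c2, c3, c4]
  congr 1
  · congr 1
    push_cast
    ring
  · apply exp_eq_of_sub_int u
    push_cast
    linear_combination ((Real.pi : ℂ) * I) * huC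

lemma star {τ : ℂ} (hτ : 0 < τ.im) : (∑' v : ι4, Lf τ v) = ∑' v : ι4, Rf τ v := by
  apply tsum_eq_tsum_of_ne_zero_bij (fun x => Tm x.val)
  · intro x y hxy
    have ox : sOdd x.val := by
      by_contra hc
      exact x.prop (Rf_eq_zero hc)
    have oy : sOdd y.val := by
      by_contra hc
      exact y.prop (Rf_eq_zero hc)
    have : Tm (Tm x.val) = Tm (Tm y.val) := congrArg Tm hxy
    rw [Tm_Tm ox, Tm_Tm oy] at this
    exact Subtype.ext this
  · intro u hu
    have ou : sOdd u := by
      by_contra hc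
      exact hu (Lf_eq_zero hc)
    have hR : Rf τ (Tm u) ≠ 0 := by
      have := Lf_Tm (τ := τ) (Tm_sOdd ou)
      rw [Tm_Tm ou] at this
      rw [← this]
      exact hu
    exact ⟨⟨Tm u, hR⟩, Tm_Tm ou⟩
  · intro x
    have ox : sOdd x.val := by
      by_contra hc
      exact x.prop (Rf_eq_zero hc)
    exact Lf_Tm ox

end Stmt9

theorem stmt_9 (τ : ℂ) (hτ : 0 < τ.im) :
    thetaChar 1 0 0 τ ^ 3 * thetaChar 1 (2/3) 0 τ
      - thetaChar 1 (1/3) 0 τ ^ 4 + thetaChar 1 (2/3) 0 τ ^ 4 = 0 := by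
  open Stmt9 in
  have h0 : thetaChar 1 0 0 τ = ∑' n : ℤ, term τ 0 n := by
    have : (0 : ℝ) = ((0 : ℤ) : ℝ)/3 := by norm_num
    rw [this, theta_eq]
  have h1 : thetaChar 1 (1/3) 0 τ = ∑' n : ℤ, term τ 1 n := by
    have : (1/3 : ℝ) = ((1 : ℤ) : ℝ)/3 := by norm_num
    rw [this, theta_eq]
  have h2 : thetaChar 1 (2/3) 0 τ = ∑' n : ℤ, term τ 2 n := by
    have : (2/3 : ℝ) = ((2 : ℤ) : ℝ)/3 := by norm_num
    rw [this, theta_eq]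
  set F0 := ∑' n : ℤ, term τ 0 n with hF0
  set F1 := ∑' n : ℤ, term τ 1 n with hF1
  set F2 := ∑' n : ℤ, term τ 2 n with hF2
  have key : F1 * (F1 * (F1 * F1)) - (∑' n : ℤ, term τ 4 n) *
      ((∑' n : ℤ, term τ 4 n) * ((∑' n : ℤ, term τ 4 n) * (∑' n : ℤ, term τ 4 n)))
      = F2 * (F0 * (F0 * F0)) - (∑' n : ℤ, term τ 5 n) *
      ((∑' n : ℤ, term τ 3 n) * ((∑' n : ℤ, term τ 3 n) * (∑' n : ℤ, term τ 3 n))) := by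
    rw [hF0, hF1, hF2, prod4 hτ 1 1 1 1, prod4 hτ 4 4 4 4, prod4 hτ 2 0 0 0, prod4 hτ 5 3 3 3]
    rw [← Summable.tsum_sub (summable_gterm hτ 1 1 1 1) (summable_gterm hτ 4 4 4 4),
      ← Summable.tsum_sub (summable_gterm hτ 2 0 0 0) (summable_gterm hτ 5 3 3 3)]
    exact star hτ
  have hn4 : (∑' n : ℤ, term τ 4 n) = - F2 := tsum_term_neg τ (by norm_num)
  have hn5 : (∑' n : ℤ, term τ 5 n) = - F1 := tsum_term_neg τ (by norm_num)
  have h3 : (∑' n : ℤ, term τ 3 n) = 0 := tsum_term_three τ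
  rw [hn4, hn5, h3] at key
  rw [h0, h1, h2]
  linear_combination - key
end

section
/- For every τ in the upper half-plane, θ[1;0]²·θ[1;1/4]·θ[1;3/4] − θ[1;1/4]²·θ[1;1/2]² + θ[1;1/2]²·θ[1;3/4]² = 0, where all theta constants are evaluated at (0,τ). -/
open Complex

/-!
Put `q = exp (π i τ / 4)` and `ζ = exp (π i / 8)`. Then `θ[1; k/4] = ∑ₙ q^{(2n+1)²} ζ^{k(2n+1)}`,
a sum over odd integers. Multiplying two such series and substituting `s = n + m + 1`,
`t = n - m` (so `s + t` is odd) turns `(2n+1)² + (2m+1)²` into `2s² + 2t²`, giving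
`θ_j θ_k = O_{j+k} E_{j-k} + E_{j+k} O_{j-k}`, where `E_u`, `O_u` are the analogous sums of
`q^{2m²} ζ^{um}` over even and odd `m`. As `ζ⁸ = -1`, these satisfy `O_{-u} = O_u`,
`E_{-u} = E_u`, `O_{u+8} = -O_u`, `E_{u+8} = E_u`, hence `O_4 = 0`, `O_6 = -O_2`, `E_6 = E_2`,
and the identity becomes a polynomial identity in `E_0, E_2, E_4, O_0, O_2`.
-/

namespace ThetaQuartic

def evenSumEquiv : ℤ × ℤ ≃ {p : ℤ × ℤ // Even (p.1 + p.2)} where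
  toFun p := ⟨(p.1 + p.2, p.1 - p.2), p.1, by ring⟩
  invFun p := ((p.1.1 + p.1.2) / 2, (p.1.1 - p.1.2) / 2)
  left_inv p := by ext <;> dsimp only <;> omega
  right_inv := by
    rintro ⟨⟨n, m⟩, k, hk⟩
    ext <;> dsimp only at hk ⊢ <;> omega

def oddSumEquiv : ℤ × ℤ ≃ {p : ℤ × ℤ // ¬Even (p.1 + p.2)} where
  toFun p := ⟨(p.1 + p.2, p.1 - p.2 - 1), by rintro ⟨k, hk⟩; omega⟩
  invFun p := ((p.1.1 + p.1.2 + 1) / 2, (p.1.1 - p.1.2 - 1) / 2)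
  left_inv p := by ext <;> dsimp only <;> omega
  right_inv := by
    rintro ⟨⟨n, m⟩, h⟩
    obtain ⟨k, hk⟩ := Int.not_even_iff_odd.mp h
    ext <;> dsimp only at hk ⊢ <;> omega

lemma tsum_int_prod_split_parity {F : ℤ × ℤ → ℂ} (hF : Summable F) :
    ∑' p, F p = ∑' p : ℤ × ℤ, F (p.1 + p.2, p.1 - p.2)
      + ∑' p : ℤ × ℤ, F (p.1 + p.2, p.1 - p.2 - 1) := by
  rw [← hF.tsum_subtype_add_tsum_subtype_compl {p | Even (p.1 + p.2)}]
  exact congr_arg₂ (· + ·) (evenSumEquiv.tsum_eq (F ·)).symm (oddSumEquiv.tsum_eq (F ·)).symm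

noncomputable def thetaTerm (A B : ℂ) (k m : ℤ) : ℂ := A ^ (m ^ 2) * B ^ (k * m)

noncomputable def oddTheta (A B : ℂ) (k : ℤ) : ℂ := ∑' n : ℤ, thetaTerm A B k (2 * n + 1)

noncomputable def evenTheta (A B : ℂ) (k : ℤ) : ℂ := ∑' n : ℤ, thetaTerm A B k (2 * n)

variable {A B : ℂ}

lemma summable_norm_thetaTerm (hA0 : A ≠ 0) (hA : ‖A‖ < 1) (hB : ‖B‖ = 1) (k : ℤ) :
    Summable fun m : ℤ => ‖thetaTerm A B k m‖ := by
  have hA0' : 0 < ‖A‖ := norm_pos_iff.mpr hA0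
  have hgeom : Summable fun m : ℤ => ‖A‖ ^ |m| := by
    apply Summable.of_nat_of_neg <;> simpa using summable_geometric_of_lt_one hA0'.le hA
  refine hgeom.of_nonneg_of_le (fun m => norm_nonneg _) fun m => ?_
  rw [thetaTerm, norm_mul, norm_zpow, norm_zpow, hB, one_zpow, mul_one]
  refine zpow_le_zpow_right_of_le_one₀ hA0' hA.le ?_
  nlinarith [abs_mul_abs_self m, abs_nonneg m, sq_abs m]

lemma thetaTerm_mul_thetaTerm (hA0 : A ≠ 0) (hB0 : B ≠ 0) (j k s t : ℤ) :
    thetaTerm A B j (s + t) * thetaTerm A B k (s - t)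
      = thetaTerm (A ^ 2) B (j + k) s * thetaTerm (A ^ 2) B (j - k) t := by
  have merge : ∀ a b c d : ℤ, A ^ a * B ^ b * (A ^ c * B ^ d) = A ^ (a + c) * B ^ (b + d) := by
    intro a b c d
    rw [zpow_add₀ hA0, zpow_add₀ hB0]
    ring
  simp only [thetaTerm, ← zpow_natCast, ← zpow_mul, merge]
  congr 2 <;> push_cast <;> ring

lemma summable_norm_thetaTerm_comp (hA0 : A ≠ 0) (hA : ‖A‖ < 1) (hB : ‖B‖ = 1) (k : ℤ)
    {f : ℤ → ℤ} (hf : Function.Injective f) : Summable fun n : ℤ => ‖thetaTerm A B k (f n)‖ :=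
  (summable_norm_thetaTerm hA0 hA hB k).comp_injective hf

lemma oddTheta_mul_oddTheta (hA0 : A ≠ 0) (hA : ‖A‖ < 1) (hB : ‖B‖ = 1) (j k : ℤ) :
    oddTheta A B j * oddTheta A B k
      = oddTheta (A ^ 2) B (j + k) * evenTheta (A ^ 2) B (j - k)
        + evenTheta (A ^ 2) B (j + k) * oddTheta (A ^ 2) B (j - k) := by
  have hB0 : B ≠ 0 := norm_ne_zero_iff.mp (by rw [hB]; exact one_ne_zero)
  have hA2 : A ^ 2 ≠ 0 := pow_ne_zero 2 hA0
  have hA2' : ‖A ^ 2‖ < 1 := by rw [norm_pow]; exact pow_lt_one₀ (norm_nonneg A) hA two_ne_zero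
  have hodd : Function.Injective fun n : ℤ => 2 * n + 1 := fun a b h => by simpa using h
  have heven : Function.Injective fun n : ℤ => 2 * n := fun a b h => by simpa using h
  have sj := summable_norm_thetaTerm_comp hA0 hA hB j hodd
  have sk := summable_norm_thetaTerm_comp hA0 hA hB k hodd
  rw [oddTheta, oddTheta, tsum_mul_tsum_of_summable_norm sj sk,
    tsum_int_prod_split_parity (summable_mul_of_summable_norm sj sk),
    oddTheta, evenTheta, oddTheta, evenTheta,
    tsum_mul_tsum_of_summable_norm (summable_norm_thetaTerm_comp hA2 hA2' hB _ hodd)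
      (summable_norm_thetaTerm_comp hA2 hA2' hB _ heven),
    tsum_mul_tsum_of_summable_norm (summable_norm_thetaTerm_comp hA2 hA2' hB _ heven)
      (summable_norm_thetaTerm_comp hA2 hA2' hB _ hodd)]
  congr 1 <;> refine tsum_congr fun ⟨c, d⟩ => ?_ <;> dsimp only
  · rw [show 2 * (c + d) + 1 = (2 * c + 1) + 2 * d by ring,
      show 2 * (c - d) + 1 = (2 * c + 1) - 2 * d by ring]
    exact thetaTerm_mul_thetaTerm hA0 hB0 j k _ _
  · rw [show 2 * (c + d) + 1 = 2 * c + (2 * d + 1) by ring,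
      show 2 * (c - d - 1) + 1 = 2 * c - (2 * d + 1) by ring]
    exact thetaTerm_mul_thetaTerm hA0 hB0 j k _ _

lemma thetaTerm_neg_neg (A B : ℂ) (k m : ℤ) : thetaTerm A B (-k) (-m) = thetaTerm A B k m := by
  simp only [thetaTerm, neg_sq, neg_mul_neg]

lemma oddTheta_neg (A B : ℂ) (k : ℤ) : oddTheta A B (-k) = oddTheta A B k := by
  rw [oddTheta, oddTheta, ← (Equiv.subLeft (-1 : ℤ)).tsum_eq]
  refine tsum_congr fun n => ?_
  rw [Equiv.subLeft_apply, show 2 * (-1 - n) + 1 = -(2 * n + 1) by ring, thetaTerm_neg_neg]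

lemma evenTheta_neg (A B : ℂ) (k : ℤ) : evenTheta A B (-k) = evenTheta A B k := by
  rw [evenTheta, evenTheta, ← (Equiv.neg ℤ).tsum_eq]
  refine tsum_congr fun n => ?_
  rw [Equiv.neg_apply, mul_neg, thetaTerm_neg_neg]

lemma thetaTerm_add_eight (hB8 : B ^ 8 = -1) (k m : ℤ) :
    thetaTerm A B (k + 8) m = (-1) ^ m * thetaTerm A B k m := by
  have hB0 : B ≠ 0 := by rintro rfl; norm_num at hB8
  rw [thetaTerm, thetaTerm, add_mul, zpow_add₀ hB0, zpow_mul B 8, zpow_ofNat, hB8]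
  ring

lemma oddTheta_add_eight (hB8 : B ^ 8 = -1) (k : ℤ) : oddTheta A B (k + 8) = -oddTheta A B k := by
  rw [oddTheta, oddTheta, ← tsum_neg]
  refine tsum_congr fun n => ?_
  rw [thetaTerm_add_eight hB8, Odd.neg_one_zpow ⟨n, rfl⟩, neg_one_mul]

lemma evenTheta_add_eight (hB8 : B ^ 8 = -1) (k : ℤ) : evenTheta A B (k + 8) = evenTheta A B k := by
  rw [evenTheta, evenTheta]
  refine tsum_congr fun n => ?_
  rw [thetaTerm_add_eight hB8, Even.neg_one_zpow ⟨n, two_mul n⟩, one_mul]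

lemma oddTheta_four (hB8 : B ^ 8 = -1) : oddTheta A B 4 = 0 := by
  have h := oddTheta_add_eight (A := A) hB8 (-4)
  rw [show (-4 : ℤ) + 8 = 4 by norm_num, oddTheta_neg] at h
  linear_combination h / 2

lemma oddTheta_six (hB8 : B ^ 8 = -1) : oddTheta A B 6 = -oddTheta A B 2 := by
  rw [← oddTheta_neg A B 2, ← oddTheta_add_eight hB8 (-2)]
  norm_num

lemma evenTheta_six (hB8 : B ^ 8 = -1) : evenTheta A B 6 = evenTheta A B 2 := by
  rw [← evenTheta_neg A B 2, ← evenTheta_add_eight hB8 (-2)]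
  norm_num

theorem oddTheta_quartic_identity (hA0 : A ≠ 0) (hA : ‖A‖ < 1) (hB : ‖B‖ = 1)
    (hB8 : B ^ 8 = -1) :
    oddTheta A B 0 ^ 2 * oddTheta A B 1 * oddTheta A B 3
      - oddTheta A B 1 ^ 2 * oddTheta A B 2 ^ 2
      + oddTheta A B 2 ^ 2 * oddTheta A B 3 ^ 2 = 0 := by
  set T := oddTheta A B
  set E := evenTheta (A ^ 2) B
  set O := oddTheta (A ^ 2) B
  have hT : ∀ j k, T j * T k = O (j + k) * E (j - k) + E (j + k) * O (j - k) :=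
    oddTheta_mul_oddTheta hA0 hA hB
  have hO2 : O (-2) = O 2 := oddTheta_neg _ _ 2
  have hE2 : E (-2) = E 2 := evenTheta_neg _ _ 2
  have hO4 : O 4 = 0 := oddTheta_four hB8
  have hO6 : O 6 = -O 2 := oddTheta_six hB8
  have hE6 : E 6 = E 2 := evenTheta_six hB8
  calc T 0 ^ 2 * T 1 * T 3 - T 1 ^ 2 * T 2 ^ 2 + T 2 ^ 2 * T 3 ^ 2
      = T 0 * T 0 * (T 1 * T 3) - T 1 * T 1 * (T 2 * T 2) + T 2 * T 2 * (T 3 * T 3) := by ring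
    _ = 0 := by
      simp only [hT]
      norm_num [hO2, hE2, hO4, hO6, hE6]
      ring

lemma norm_cexp_pi_mul_I_mul_div_four_lt_one {τ : ℂ} (hτ : 0 < τ.im) :
    ‖cexp (Real.pi * I * τ / 4)‖ < 1 := by
  rw [norm_exp, Real.exp_lt_one_iff]
  simp only [div_ofNat_re, mul_re, ofReal_re, I_re, ofReal_im, I_im, mul_im]
  nlinarith [Real.pi_pos]

lemma norm_cexp_pi_mul_I_div_eight : ‖cexp (Real.pi * I / 8)‖ = 1 := by
  rw [show (Real.pi : ℂ) * I / 8 = ((Real.pi / 8 : ℝ) : ℂ) * I by push_cast; ring]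
  exact norm_exp_ofReal_mul_I _

lemma cexp_pi_mul_I_div_eight_pow_eight : cexp (Real.pi * I / 8) ^ 8 = -1 := by
  rw [← exp_nat_mul, show ((8 : ℕ) : ℂ) * (Real.pi * I / 8) = Real.pi * I by push_cast; ring,
    exp_pi_mul_I]

lemma thetaChar_one_eq_oddTheta (τ : ℂ) (k : ℤ) :
    thetaChar 1 (k / 4) 0 τ = oddTheta (cexp (Real.pi * I * τ / 4)) (cexp (Real.pi * I / 8)) k := by
  refine tsum_congr fun n => ?_
  rw [thetaTerm, ← exp_int_mul, ← exp_int_mul, ← exp_add]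
  push_cast
  ring_nf

end ThetaQuartic

theorem stmt_14 (τ : ℂ) (hτ : 0 < τ.im) :
    thetaChar 1 0 0 τ ^ 2 * thetaChar 1 (1/4) 0 τ * thetaChar 1 (3/4) 0 τ
      - thetaChar 1 (1/4) 0 τ ^ 2 * thetaChar 1 (1/2) 0 τ ^ 2
      + thetaChar 1 (1/2) 0 τ ^ 2 * thetaChar 1 (3/4) 0 τ ^ 2 = 0 := by
  rw [show (0 : ℝ) = ((0 : ℤ) : ℝ) / 4 by norm_num,
    show (1 / 4 : ℝ) = ((1 : ℤ) : ℝ) / 4 by norm_num,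
    show (1 / 2 : ℝ) = ((2 : ℤ) : ℝ) / 4 by norm_num,
    show (3 / 4 : ℝ) = ((3 : ℤ) : ℝ) / 4 by norm_num]
  simp only [ThetaQuartic.thetaChar_one_eq_oddTheta]
  exact ThetaQuartic.oddTheta_quartic_identity (exp_ne_zero _)
    (ThetaQuartic.norm_cexp_pi_mul_I_mul_div_four_lt_one hτ)
    ThetaQuartic.norm_cexp_pi_mul_I_div_eight ThetaQuartic.cexp_pi_mul_I_div_eight_pow_eight
end

section
/- For every τ in the upper half-plane, θ[1;1/4]⁴ − θ[1;3/4]⁴ − θ[1;1/2]·θ[1;0]³ = 0, where all theta constants are evaluated at (0,τ). -/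
open Complex

open Real in
lemma summable_norm_jtt {τ : ℂ} (z : ℂ) (hτ : 0 < τ.im) :
    Summable fun n : ℤ => ‖jacobiTheta₂_term n z τ‖ := by
  refine (summable_pow_mul_jacobiTheta₂_term_bound |z.im| hτ 0).of_nonneg_of_le
    (fun _ => norm_nonneg _) (fun n => ?_)
  simpa only [pow_zero, one_mul] using norm_jacobiTheta₂_term_le hτ le_rfl le_rfl n

lemma hasSum_mul_jtt {τ : ℂ} (z w : ℂ) (hτ : 0 < τ.im) :
    HasSum (fun p : ℤ × ℤ => jacobiTheta₂_term p.1 z τ * jacobiTheta₂_term p.2 w τ)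
      (jacobiTheta₂ z τ * jacobiTheta₂ w τ) := by
  have hs := summable_mul_of_summable_norm (summable_norm_jtt z hτ) (summable_norm_jtt w hτ)
  have := tsum_mul_tsum_of_summable_norm (summable_norm_jtt z hτ) (summable_norm_jtt w hτ)
  rw [jacobiTheta₂, jacobiTheta₂, this]
  exact hs.hasSum

def evenSet : Set (ℤ × ℤ) := {p | Even (p.1 + p.2)}

def evenEquiv : ℤ × ℤ ≃ evenSet where
  toFun q := ⟨(q.1 + q.2, q.1 - q.2), by
    show Even ((q.1 + q.2) + (q.1 - q.2))
    exact ⟨q.1, by ring⟩⟩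
  invFun p := ((p.1.1 + p.1.2) / 2, (p.1.1 - p.1.2) / 2)
  left_inv q := by obtain ⟨a, b⟩ := q; refine Prod.ext ?_ ?_ <;> simp <;> omega
  right_inv p := by
    obtain ⟨⟨n, m⟩, h⟩ := p
    obtain ⟨k, hk⟩ := h
    refine Subtype.ext (Prod.ext ?_ ?_) <;> simp at hk ⊢ <;> omega

def oddEquiv : ℤ × ℤ ≃ (evenSetᶜ : Set (ℤ × ℤ)) where
  toFun q := ⟨(q.1 + q.2 + 1, q.1 - q.2), by
    simp only [Set.mem_compl_iff, evenSet, Set.mem_setOf_eq, Int.even_iff]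
    omega⟩
  invFun p := ((p.1.1 + p.1.2 - 1) / 2, (p.1.1 - p.1.2 - 1) / 2)
  left_inv q := by obtain ⟨a, b⟩ := q; refine Prod.ext ?_ ?_ <;> simp <;> omega
  right_inv p := by
    obtain ⟨⟨n, m⟩, h⟩ := p
    simp only [Set.mem_compl_iff, evenSet, Set.mem_setOf_eq, Int.even_iff] at h
    refine Subtype.ext (Prod.ext ?_ ?_) <;> simp <;> omega

open Real in
theorem jt2_mul {τ : ℂ} (hτ : 0 < τ.im) (z w : ℂ) :
    jacobiTheta₂ z τ * jacobiTheta₂ w τ =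
      jacobiTheta₂ (z + w) (2 * τ) * jacobiTheta₂ (z - w) (2 * τ)
      + cexp ((π : ℂ) * I * (τ + 2 * z)) *
        (jacobiTheta₂ (z + w + τ) (2 * τ) * jacobiTheta₂ (z - w + τ) (2 * τ)) := by
  have h2 : 0 < (2 * τ).im := by
    rw [Complex.mul_im]
    simp
    linarith
  set F : ℤ × ℤ → ℂ := fun p => jacobiTheta₂_term p.1 z τ * jacobiTheta₂_term p.2 w τ with hF
  have heven : HasSum ((F ∘ (↑)) : evenSet → ℂ)
      (jacobiTheta₂ (z + w) (2 * τ) * jacobiTheta₂ (z - w) (2 * τ)) := by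
    rw [← evenEquiv.hasSum_iff]
    have hpt : ((F ∘ (↑)) ∘ evenEquiv) = fun q : ℤ × ℤ =>
        jacobiTheta₂_term q.1 (z + w) (2 * τ) * jacobiTheta₂_term q.2 (z - w) (2 * τ) := by
      funext q
      simp only [Function.comp_apply, hF, evenEquiv, Equiv.coe_fn_mk, jacobiTheta₂_term,
        ← Complex.exp_add]
      congr 1
      push_cast
      ring
    rw [hpt]
    exact hasSum_mul_jtt _ _ h2
  have hodd : HasSum ((F ∘ (↑)) : (evenSetᶜ : Set (ℤ × ℤ)) → ℂ)
      (cexp ((π : ℂ) * I * (τ + 2 * z)) *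
        (jacobiTheta₂ (z + w + τ) (2 * τ) * jacobiTheta₂ (z - w + τ) (2 * τ))) := by
    rw [← oddEquiv.hasSum_iff]
    have hpt : ((F ∘ (↑)) ∘ oddEquiv) = fun q : ℤ × ℤ =>
        cexp ((π : ℂ) * I * (τ + 2 * z)) *
          (jacobiTheta₂_term q.1 (z + w + τ) (2 * τ) *
            jacobiTheta₂_term q.2 (z - w + τ) (2 * τ)) := by
      funext q
      simp only [Function.comp_apply, hF, oddEquiv, Equiv.coe_fn_mk, jacobiTheta₂_term,
        ← Complex.exp_add, mul_assoc]
      congr 1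
      push_cast
      ring
    rw [hpt]
    exact ((hasSum_mul_jtt _ _ h2).mul_left _).congr_fun (fun q => by rw [mul_assoc])
  exact (hasSum_mul_jtt z w hτ).unique (heven.add_compl hodd)

open Real in
lemma fJ (τ : ℂ) (x : ℝ) : thetaChar 1 x 0 τ =
    cexp ((π : ℂ) * I * (τ / 4 + (x : ℂ) / 2)) * jacobiTheta₂ ((τ + (x : ℂ)) / 2) τ := by
  rw [thetaChar, jacobiTheta₂, ← tsum_mul_left]
  refine tsum_congr fun n => ?_
  rw [jacobiTheta₂_term, ← Complex.exp_add]
  congr 1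
  push_cast
  ring

open Real in
lemma mul_theta {τ : ℂ} (hτ : 0 < τ.im) (x y : ℝ) :
    thetaChar 1 x 0 τ * thetaChar 1 y 0 τ =
      cexp ((π : ℂ) * I * (τ / 2 + ((x : ℂ) + (y : ℂ)) / 2)) *
        (jacobiTheta₂ (τ + ((x : ℂ) + (y : ℂ)) / 2) (2 * τ) *
          jacobiTheta₂ (((x : ℂ) - (y : ℂ)) / 2) (2 * τ))
      + cexp ((π : ℂ) * I * (τ / 2 + ((x : ℂ) - (y : ℂ)) / 2)) *
        (jacobiTheta₂ (((x : ℂ) + (y : ℂ)) / 2) (2 * τ) *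
          jacobiTheta₂ (τ + ((x : ℂ) - (y : ℂ)) / 2) (2 * τ)) := by
  have h := jt2_mul hτ ((τ + (x : ℂ)) / 2) ((τ + (y : ℂ)) / 2)
  rw [show (τ + (x : ℂ)) / 2 + (τ + (y : ℂ)) / 2 = τ + ((x : ℂ) + (y : ℂ)) / 2 by ring,
      show (τ + (x : ℂ)) / 2 - (τ + (y : ℂ)) / 2 = ((x : ℂ) - (y : ℂ)) / 2 by ring] at h
  rw [show τ + ((x : ℂ) + (y : ℂ)) / 2 + τ = ((x : ℂ) + (y : ℂ)) / 2 + 2 * τ by ring,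
      show ((x : ℂ) - (y : ℂ)) / 2 + τ = τ + ((x : ℂ) - (y : ℂ)) / 2 by ring,
      jacobiTheta₂_add_left'] at h
  rw [fJ τ x, fJ τ y]
  have e1 : cexp ((π : ℂ) * I * (τ / 4 + (x : ℂ) / 2)) * cexp ((π : ℂ) * I * (τ / 4 + (y : ℂ) / 2)) =
      cexp ((π : ℂ) * I * (τ / 2 + ((x : ℂ) + (y : ℂ)) / 2)) := by
    rw [← Complex.exp_add]; congr 1; ring
  have e2 : cexp ((π : ℂ) * I * (τ / 4 + (x : ℂ) / 2)) * cexp ((π : ℂ) * I * (τ / 4 + (y : ℂ) / 2)) *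
      (cexp ((π : ℂ) * I * (τ + 2 * ((τ + (x : ℂ)) / 2))) *
        cexp (-(π : ℂ) * I * (2 * τ + 2 * (((x : ℂ) + (y : ℂ)) / 2)))) =
      cexp ((π : ℂ) * I * (τ / 2 + ((x : ℂ) - (y : ℂ)) / 2)) := by
    rw [← Complex.exp_add, ← Complex.exp_add, ← Complex.exp_add]; congr 1; ring
  linear_combination (norm := ring_nf)
    (cexp ((π : ℂ) * I * (τ / 4 + (x : ℂ) / 2)) * cexp ((π : ℂ) * I * (τ / 4 + (y : ℂ) / 2))) * h
    + (jacobiTheta₂ (τ + ((x : ℂ) + (y : ℂ)) / 2) (2 * τ) *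
        jacobiTheta₂ (((x : ℂ) - (y : ℂ)) / 2) (2 * τ)) * e1
    + (jacobiTheta₂ (((x : ℂ) + (y : ℂ)) / 2) (2 * τ) *
        jacobiTheta₂ (τ + ((x : ℂ) - (y : ℂ)) / 2) (2 * τ)) * e2

open Real in
lemma theta34_eq (τ : ℂ) : jacobiTheta₂ (3 / 4 : ℂ) (2 * τ) = jacobiTheta₂ (1 / 4 : ℂ) (2 * τ) := by
  rw [show (3 / 4 : ℂ) = -(1 / 4 : ℂ) + 1 by norm_num, jacobiTheta₂_add_left,
    jacobiTheta₂_neg_left]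

open Real in
lemma thetaT34_eq (τ : ℂ) : jacobiTheta₂ (τ + 3 / 4) (2 * τ) =
    cexp ((π : ℂ) * I * (1 / 2)) * jacobiTheta₂ (τ + 1 / 4) (2 * τ) := by
  have h1 := jacobiTheta₂_add_left' ((1 / 4 : ℂ) - τ) (2 * τ)
  rw [show (1 / 4 : ℂ) - τ + 2 * τ = τ + 1 / 4 by ring] at h1
  have h2 : jacobiTheta₂ ((1 / 4 : ℂ) - τ) (2 * τ) = jacobiTheta₂ (τ + 3 / 4) (2 * τ) := by
    rw [show ((1 / 4 : ℂ) - τ) = -(τ - 1 / 4) by ring, jacobiTheta₂_neg_left,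
        show (τ + 3 / 4 : ℂ) = (τ - 1 / 4) + 1 by ring, jacobiTheta₂_add_left]
  have e : cexp (-(π : ℂ) * I * (2 * τ + 2 * ((1 / 4 : ℂ) - τ))) * cexp ((π : ℂ) * I * (1 / 2))
      = 1 := by
    rw [← Complex.exp_add,
      show -(π : ℂ) * I * (2 * τ + 2 * ((1 / 4 : ℂ) - τ)) + (π : ℂ) * I * (1 / 2) = 0 by ring,
      Complex.exp_zero]
  linear_combination (norm := ring_nf) (-(jacobiTheta₂ (τ + 3 / 4) (2 * τ))) * e
    + (-(cexp ((π : ℂ) * I * (1 / 2)) * cexp (-(π : ℂ) * I * (2 * τ + 2 * ((1 / 4 : ℂ) - τ))))) * h2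
    + (-(cexp ((π : ℂ) * I * (1 / 2)))) * h1

theorem stmt_15 (τ : ℂ) (hτ : 0 < τ.im) :
    thetaChar 1 (1/4) 0 τ ^ 4 - thetaChar 1 (3/4) 0 τ ^ 4
      - thetaChar 1 (1/2) 0 τ * thetaChar 1 0 0 τ ^ 3 = 0 := by
  have hA := mul_theta hτ (1/4) (1/4)
  have hB := mul_theta hτ (3/4) (3/4)
  have hC := mul_theta hτ (1/2) 0
  have hD := mul_theta hτ 0 0
  rw [show ((((1:ℝ)/4 : ℝ) : ℂ) + (((1:ℝ)/4 : ℝ) : ℂ)) / 2 = (1/4 : ℂ) by norm_num,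
      show ((((1:ℝ)/4 : ℝ) : ℂ) - (((1:ℝ)/4 : ℝ) : ℂ)) / 2 = (0 : ℂ) by norm_num,
      show τ + (0 : ℂ) = τ by ring, show τ/2 + (0 : ℂ) = τ/2 by ring] at hA
  rw [show ((((3:ℝ)/4 : ℝ) : ℂ) + (((3:ℝ)/4 : ℝ) : ℂ)) / 2 = (3/4 : ℂ) by norm_num,
      show ((((3:ℝ)/4 : ℝ) : ℂ) - (((3:ℝ)/4 : ℝ) : ℂ)) / 2 = (0 : ℂ) by norm_num,
      show τ + (0 : ℂ) = τ by ring, show τ/2 + (0 : ℂ) = τ/2 by ring,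
      theta34_eq τ, thetaT34_eq τ] at hB
  rw [show ((((1:ℝ)/2 : ℝ) : ℂ) + ((0 : ℝ) : ℂ)) / 2 = (1/4 : ℂ) by norm_num,
      show ((((1:ℝ)/2 : ℝ) : ℂ) - ((0 : ℝ) : ℂ)) / 2 = (1/4 : ℂ) by norm_num] at hC
  rw [show (((0 : ℝ) : ℂ) + ((0 : ℝ) : ℂ)) / 2 = (0 : ℂ) by norm_num,
      show (((0 : ℝ) : ℂ) - ((0 : ℝ) : ℂ)) / 2 = (0 : ℂ) by norm_num,
      show τ + (0 : ℂ) = τ by ring, show τ/2 + (0 : ℂ) = τ/2 by ring] at hD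
  have hgb : cexp ((Real.pi : ℂ) * I * (τ/2 + 3/4)) * cexp ((Real.pi : ℂ) * I * (1/2)) =
      -cexp ((Real.pi : ℂ) * I * (τ/2 + 1/4)) := by
    rw [← Complex.exp_add,
      show (Real.pi : ℂ) * I * (τ/2 + 3/4) + (Real.pi : ℂ) * I * (1/2) =
        (Real.pi : ℂ) * I * (τ/2 + 1/4) + (Real.pi : ℂ) * I by ring,
      Complex.exp_add, Complex.exp_pi_mul_I, mul_neg_one]
  have hB' : thetaChar 1 (3/4) 0 τ * thetaChar 1 (3/4) 0 τ =
      -cexp ((Real.pi : ℂ) * I * (τ/2 + 1/4)) *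
        (jacobiTheta₂ (τ + 1/4) (2*τ) * jacobiTheta₂ 0 (2*τ))
      + cexp ((Real.pi : ℂ) * I * (τ/2)) *
        (jacobiTheta₂ (1/4 : ℂ) (2*τ) * jacobiTheta₂ τ (2*τ)) := by
    linear_combination (norm := ring_nf) hB
      + (jacobiTheta₂ (τ + 1/4) (2*τ) * jacobiTheta₂ 0 (2*τ)) * hgb
  linear_combination (norm := ring_nf)
    (thetaChar 1 (1/4) 0 τ * thetaChar 1 (1/4) 0 τ
      + (cexp ((Real.pi : ℂ) * I * (τ/2 + 1/4)) *
          (jacobiTheta₂ (τ + 1/4) (2*τ) * jacobiTheta₂ 0 (2*τ))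
        + cexp ((Real.pi : ℂ) * I * (τ/2)) *
          (jacobiTheta₂ (1/4 : ℂ) (2*τ) * jacobiTheta₂ τ (2*τ)))) * hA
    - (thetaChar 1 (3/4) 0 τ * thetaChar 1 (3/4) 0 τ
      + (-cexp ((Real.pi : ℂ) * I * (τ/2 + 1/4)) *
          (jacobiTheta₂ (τ + 1/4) (2*τ) * jacobiTheta₂ 0 (2*τ))
        + cexp ((Real.pi : ℂ) * I * (τ/2)) *
          (jacobiTheta₂ (1/4 : ℂ) (2*τ) * jacobiTheta₂ τ (2*τ)))) * hB'
    - (thetaChar 1 0 0 τ * thetaChar 1 0 0 τ) * hC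
    - (cexp ((Real.pi : ℂ) * I * (τ/2 + 1/4)) *
        (jacobiTheta₂ (τ + 1/4) (2*τ) * jacobiTheta₂ (1/4 : ℂ) (2*τ))
      + cexp ((Real.pi : ℂ) * I * (τ/2 + 1/4)) *
        (jacobiTheta₂ (1/4 : ℂ) (2*τ) * jacobiTheta₂ (τ + 1/4) (2*τ))) * hD
end
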